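/- arXiv:2002.10412 — 3 statements merged into one kernel-verified Lean document; each statement's English description precedes it below -/
import Mathlib

section
/- In the right-censoring current-status latent model, assume that Δ is independent of the pair (T,C) and that T and C are independent, and let μ_T and μ_C denote the laws of T and C. Then for every Borel set B⊆[0,∞): H_0(B) = p·∫_B P(C≥t) μ_T(dt), H_1(B) = ∫_B P(T>t) μ_C(dt), and H_2(B) = (1−p)·∫_B P(T≤t) μ_C(dt). -/
open MeasureTheory ProbabilityTheory
open scoped ENNReal

/-- In the right-censoring current-status latent model, with `Δ ⟂ (T,C)`
and `T ⟂ C`, for every Borel `B ⊆ [0,∞)`: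
`H₀(B) = p·∫_B P(C ≥ t) μ_T(dt)`, `H₁(B) = ∫_B P(T > t) μ_C(dt)`,
`H₂(B) = (1−p)·∫_B P(T ≤ t) μ_C(dt)`. -/
theorem right_censoring_current_status_subdistributions
    {Ω : Type*} [MeasurableSpace Ω] (P : Measure Ω) [IsProbabilityMeasure P]
    (T C X : Ω → ℝ≥0∞) (Δ A : Ω → ℕ)
    (hmT : Measurable T) (hmC : Measurable C) (hmΔ : Measurable Δ)
    (hmX : Measurable X) (hmA : Measurable A)
    (hCfin : ∀ ω, C ω < ∞)
    (hΔ01 : ∀ ω, Δ ω = 0 ∨ Δ ω = 1)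
    (p : ℝ) (hp : p ∈ Set.Ioc (0:ℝ) 1)
    (hpΔ : P {ω | Δ ω = 1} = ENNReal.ofReal p)
    (model0 : ∀ ω, T ω ≤ C ω → Δ ω = 1 → X ω = T ω ∧ A ω = 0)
    (model1 : ∀ ω, C ω < T ω → X ω = C ω ∧ A ω = 1)
    (model2 : ∀ ω, T ω ≤ C ω → Δ ω = 0 → X ω = C ω ∧ A ω = 2)
    (hindepΔ : IndepFun Δ (fun ω => (T ω, C ω)) P)
    (hindepTC : IndepFun T C P) :
    ∀ B : Set ℝ≥0∞, MeasurableSet B → ∞ ∉ B →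
      (P {ω | X ω ∈ B ∧ A ω = 0}
          = ENNReal.ofReal p * ∫⁻ t in B, P {ω | t ≤ C ω} ∂(P.map T)) ∧
      (P {ω | X ω ∈ B ∧ A ω = 1}
          = ∫⁻ t in B, P {ω | t < T ω} ∂(P.map C)) ∧
      (P {ω | X ω ∈ B ∧ A ω = 2}
          = (1 - ENNReal.ofReal p) * ∫⁻ t in B, P {ω | T ω ≤ t} ∂(P.map C)) := by
  intro B hB hBinf
  have hf : Measurable fun ω => (T ω, C ω) := hmT.prodMk hmC
  have hmap : P.map (fun ω => (T ω, C ω)) = (P.map T).prod (P.map C) :=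
    (indepFun_iff_map_prod_eq_prod_map_map hmT.aemeasurable hmC.aemeasurable).mp hindepTC
  have instT : IsProbabilityMeasure (P.map T) := Measure.isProbabilityMeasure_map hmT.aemeasurable
  have instC : IsProbabilityMeasure (P.map C) := Measure.isProbabilityMeasure_map hmC.aemeasurable
  -- measurable sections
  have hle : MeasurableSet {q : ℝ≥0∞ × ℝ≥0∞ | q.1 ≤ q.2} :=
    measurableSet_le measurable_fst measurable_snd
  have hlt : MeasurableSet {q : ℝ≥0∞ × ℝ≥0∞ | q.2 < q.1} :=
    measurableSet_lt measurable_snd measurable_fst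
  have hS0 : MeasurableSet {q : ℝ≥0∞ × ℝ≥0∞ | q.1 ∈ B ∧ q.1 ≤ q.2} :=
    (measurable_fst hB).inter hle
  have hS1 : MeasurableSet {q : ℝ≥0∞ × ℝ≥0∞ | q.2 ∈ B ∧ q.2 < q.1} :=
    (measurable_snd hB).inter hlt
  have hS2 : MeasurableSet {q : ℝ≥0∞ × ℝ≥0∞ | q.2 ∈ B ∧ q.1 ≤ q.2} :=
    (measurable_snd hB).inter hle
  have hΔ0 : P {ω | Δ ω = 0} = 1 - ENNReal.ofReal p := by
    have hcompl : {ω | Δ ω = 0} = {ω | Δ ω = 1}ᶜ := by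
      ext ω
      rcases hΔ01 ω with d | d <;> simp [d]
    have hms : MeasurableSet {ω | Δ ω = 1} := hmΔ (measurableSet_singleton 1)
    rw [hcompl, measure_compl hms (measure_ne_top _ _), hpΔ, measure_univ]
  refine ⟨?_, ?_, ?_⟩
  · -- H₀
    have hset : {ω | X ω ∈ B ∧ A ω = 0}
        = Δ ⁻¹' {1} ∩ (fun ω => (T ω, C ω)) ⁻¹' {q | q.1 ∈ B ∧ q.1 ≤ q.2} := by
      ext ω
      simp only [Set.mem_setOf_eq, Set.mem_inter_iff, Set.mem_preimage, Set.mem_singleton_iff]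
      constructor
      · rintro ⟨hX, hA⟩
        rcases le_or_gt (T ω) (C ω) with h | h
        · rcases hΔ01 ω with d | d
          · rw [(model2 ω h d).2] at hA; norm_num at hA
          · obtain ⟨hXT, -⟩ := model0 ω h d
            exact ⟨d, hXT ▸ hX, h⟩
        · rw [(model1 ω h).2] at hA; norm_num at hA
      · rintro ⟨d, hTB, h⟩
        obtain ⟨hXT, hA⟩ := model0 ω h d
        exact ⟨hXT ▸ hTB, hA⟩
    rw [hset, hindepΔ.measure_inter_preimage_eq_mul _ _ (measurableSet_singleton 1) hS0]
    have h1 : Δ ⁻¹' {1} = {ω | Δ ω = 1} := rfl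
    rw [h1, hpΔ, ← Measure.map_apply hf hS0, hmap, Measure.prod_apply hS0,
      ← lintegral_indicator hB]
    congr 1
    refine lintegral_congr fun t => ?_
    by_cases ht : t ∈ B
    · have : (Prod.mk t ⁻¹' {q : ℝ≥0∞ × ℝ≥0∞ | q.1 ∈ B ∧ q.1 ≤ q.2}) = Set.Ici t := by
        ext c; simp [ht]
      rw [this, Set.indicator_of_mem ht, Measure.map_apply hmC measurableSet_Ici]
      rfl
    · have : (Prod.mk t ⁻¹' {q : ℝ≥0∞ × ℝ≥0∞ | q.1 ∈ B ∧ q.1 ≤ q.2}) = ∅ := by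
        ext c; simp [ht]
      rw [this, Set.indicator_of_notMem ht, measure_empty]
  · -- H₁
    have hset : {ω | X ω ∈ B ∧ A ω = 1}
        = (fun ω => (T ω, C ω)) ⁻¹' {q | q.2 ∈ B ∧ q.2 < q.1} := by
      ext ω
      simp only [Set.mem_setOf_eq, Set.mem_preimage]
      constructor
      · rintro ⟨hX, hA⟩
        rcases le_or_gt (T ω) (C ω) with h | h
        · rcases hΔ01 ω with d | d
          · rw [(model2 ω h d).2] at hA; norm_num at hA
          · rw [(model0 ω h d).2] at hA; norm_num at hA
        · obtain ⟨hXC, -⟩ := model1 ω h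
          exact ⟨hXC ▸ hX, h⟩
      · rintro ⟨hCB, h⟩
        obtain ⟨hXC, hA⟩ := model1 ω h
        exact ⟨hXC ▸ hCB, hA⟩
    rw [hset, ← Measure.map_apply hf hS1, hmap, Measure.prod_apply_symm hS1,
      ← lintegral_indicator hB]
    refine lintegral_congr fun t => ?_
    by_cases ht : t ∈ B
    · have : ((fun x => (x, t)) ⁻¹' {q : ℝ≥0∞ × ℝ≥0∞ | q.2 ∈ B ∧ q.2 < q.1}) = Set.Ioi t := by
        ext s; simp [ht]
      rw [this, Set.indicator_of_mem ht, Measure.map_apply hmT measurableSet_Ioi]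
      rfl
    · have : ((fun x => (x, t)) ⁻¹' {q : ℝ≥0∞ × ℝ≥0∞ | q.2 ∈ B ∧ q.2 < q.1}) = ∅ := by
        ext s; simp [ht]
      rw [this, Set.indicator_of_notMem ht, measure_empty]
  · -- H₂
    have hset : {ω | X ω ∈ B ∧ A ω = 2}
        = Δ ⁻¹' {0} ∩ (fun ω => (T ω, C ω)) ⁻¹' {q | q.2 ∈ B ∧ q.1 ≤ q.2} := by
      ext ω
      simp only [Set.mem_setOf_eq, Set.mem_inter_iff, Set.mem_preimage, Set.mem_singleton_iff]
      constructor
      · rintro ⟨hX, hA⟩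
        rcases le_or_gt (T ω) (C ω) with h | h
        · rcases hΔ01 ω with d | d
          · obtain ⟨hXC, -⟩ := model2 ω h d
            exact ⟨d, hXC ▸ hX, h⟩
          · rw [(model0 ω h d).2] at hA; norm_num at hA
        · rw [(model1 ω h).2] at hA; norm_num at hA
      · rintro ⟨d, hCB, h⟩
        obtain ⟨hXC, hA⟩ := model2 ω h d
        exact ⟨hXC ▸ hCB, hA⟩
    rw [hset, hindepΔ.measure_inter_preimage_eq_mul _ _ (measurableSet_singleton 0) hS2]
    have h0 : Δ ⁻¹' {0} = {ω | Δ ω = 0} := rfl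
    rw [h0, hΔ0, ← Measure.map_apply hf hS2, hmap, Measure.prod_apply_symm hS2,
      ← lintegral_indicator hB]
    congr 1
    refine lintegral_congr fun t => ?_
    by_cases ht : t ∈ B
    · have : ((fun x => (x, t)) ⁻¹' {q : ℝ≥0∞ × ℝ≥0∞ | q.2 ∈ B ∧ q.1 ≤ q.2}) = Set.Iic t := by
        ext s; simp [ht]
      rw [this, Set.indicator_of_mem ht, Measure.map_apply hmT measurableSet_Iic]
      rfl
    · have : ((fun x => (x, t)) ⁻¹' {q : ℝ≥0∞ × ℝ≥0∞ | q.2 ∈ B ∧ q.1 ≤ q.2}) = ∅ := by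
        ext s; simp [ht]
      rw [this, Set.indicator_of_notMem ht, measure_empty]
end

section
/- In the right-censoring current-status latent model, assume that Δ is independent of (T,C), that T and C are independent, and that the law of T restricted to [0,∞) has a density f with respect to Lebesgue measure. Fix t≥0 with P(T>t)>0 and P(C≥t)>0. Then the baseline cumulative hazard Λ(t)=∫_0^t f(s)/P(T>s) ds admits the inversion formula Λ(t) = ∫_{[0,t]} H_0(ds) / ( H_0([s,∞)) + p·H_1([s,∞)) ). -/
open MeasureTheory ProbabilityTheory
open scoped ENNReal

/-- In the right-censoring current-status latent model, with `Δ ⟂ (T,C)`,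
`T ⟂ C`, and the law of `T` restricted to `[0,∞)` having a Lebesgue density `f`, for any
`t ≥ 0` with `P(T > t) > 0` and `P(C ≥ t) > 0`, the baseline cumulative hazard
`Λ(t) = ∫_0^t f(s)/P(T > s) ds` satisfies the inversion formula
`Λ(t) = ∫_{[0,t]} H₀(ds)/(H₀([s,∞)) + p·H₁([s,∞)))`. -/
theorem right_censoring_current_status_hazard_inversion
    {Ω : Type*} [MeasurableSpace Ω] (P : Measure Ω) [IsProbabilityMeasure P]
    (T C X : Ω → ℝ≥0∞) (Δ A : Ω → ℕ)
    (hmT : Measurable T) (hmC : Measurable C) (hmΔ : Measurable Δ)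
    (hmX : Measurable X) (hmA : Measurable A)
    (hCfin : ∀ ω, C ω < ∞)
    (hΔ01 : ∀ ω, Δ ω = 0 ∨ Δ ω = 1)
    (p : ℝ) (hp : p ∈ Set.Ioc (0:ℝ) 1)
    (hpΔ : P {ω | Δ ω = 1} = ENNReal.ofReal p)
    (model0 : ∀ ω, T ω ≤ C ω → Δ ω = 1 → X ω = T ω ∧ A ω = 0)
    (model1 : ∀ ω, C ω < T ω → X ω = C ω ∧ A ω = 1)
    (model2 : ∀ ω, T ω ≤ C ω → Δ ω = 0 → X ω = C ω ∧ A ω = 2)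
    (hindepΔ : IndepFun Δ (fun ω => (T ω, C ω)) P)
    (hindepTC : IndepFun T C P)
    -- the law of `T` restricted to `[0,∞)` has density `f` with respect to Lebesgue measure
    (f : ℝ → ℝ≥0∞) (hf : Measurable f)
    (hdens : ∀ B : Set ℝ, MeasurableSet B → B ⊆ Set.Ici (0:ℝ) →
      P {ω | T ω ≠ ∞ ∧ (T ω).toReal ∈ B} = ∫⁻ s in B, f s ∂volume)
    (t : ℝ) (ht : 0 ≤ t)
    (hT : 0 < P {ω | ENNReal.ofReal t < T ω})
    (hC : 0 < P {ω | ENNReal.ofReal t ≤ C ω}) :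
    ∫⁻ s in Set.Icc (0:ℝ) t, f s * (P {ω | ENNReal.ofReal s < T ω})⁻¹ ∂volume
      = ∫⁻ s in Set.Iic (ENNReal.ofReal t),
          (((P.restrict {ω | A ω = 0}).map X) (Set.Ici s)
            + ENNReal.ofReal p * ((P.restrict {ω | A ω = 1}).map X) (Set.Ici s))⁻¹
          ∂((P.restrict {ω | A ω = 0}).map X) := by
  classical
  obtain ⟨hp0, hp1⟩ := hp
  set c : ℝ≥0∞ := ENNReal.ofReal t with hcdef
  set ST : ℝ≥0∞ → ℝ≥0∞ := fun u => P {ω | u ≤ T ω} with hSTdef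
  set SC : ℝ≥0∞ → ℝ≥0∞ := fun u => P {ω | u ≤ C ω} with hSCdef
  have hSTmeas : Measurable ST :=
    Antitone.measurable (fun u v huv => measure_mono fun ω h => le_trans huv h)
  have hSCmeas : Measurable SC :=
    Antitone.measurable (fun u v huv => measure_mono fun ω h => le_trans huv h)
  set g : ℝ≥0∞ → ℝ≥0∞ := fun u => (ENNReal.ofReal p * (ST u * SC u))⁻¹ with hgdef
  have hgmeas : Measurable g := (measurable_const.mul (hSTmeas.mul hSCmeas)).inv
  have hsetTC : MeasurableSet {ω | T ω ≤ C ω} := measurableSet_le hmT hmC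
  have hsetΔ : MeasurableSet {ω | Δ ω = 1} := hmΔ (measurableSet_singleton 1)
  -- identification of the events {A = 0} and {A = 1}
  have hA0 : {ω | A ω = 0} = {ω | Δ ω = 1} ∩ {ω | T ω ≤ C ω} := by
    ext ω
    simp only [Set.mem_setOf_eq, Set.mem_inter_iff]
    constructor
    · intro h
      rcases lt_or_ge (C ω) (T ω) with hlt | hle
      · have := (model1 ω hlt).2; omega
      · rcases hΔ01 ω with h0 | h1
        · have := (model2 ω hle h0).2; omega
        · exact ⟨h1, hle⟩
    · rintro ⟨h1, h2⟩
      exact (model0 ω h2 h1).2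
  have hA1 : {ω | A ω = 1} = {ω | C ω < T ω} := by
    ext ω
    simp only [Set.mem_setOf_eq]
    constructor
    · intro h
      rcases lt_or_ge (C ω) (T ω) with hlt | hle
      · exact hlt
      · rcases hΔ01 ω with h0 | h1
        · have := (model2 ω hle h0).2; omega
        · have := (model0 ω hle h1).2; omega
    · intro h; exact (model1 ω h).2
  set W : Ω → ℝ≥0∞ × ℝ≥0∞ := fun ω => (T ω, C ω) with hWdef
  have hmW : Measurable W := hmT.prodMk hmC
  -- independence of Δ from (T, C) at the level of measures
  have hΔmul : ∀ (S : Set (ℝ≥0∞ × ℝ≥0∞)), MeasurableSet S →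
      P ({ω | Δ ω = 1} ∩ W ⁻¹' S) = ENNReal.ofReal p * P (W ⁻¹' S) := by
    intro S hS
    have hpre : Δ ⁻¹' {1} = {ω | Δ ω = 1} := by ext ω; simp
    have := hindepΔ.measure_inter_preimage_eq_mul {1} S (measurableSet_singleton 1) hS
    rw [hpre, hpΔ] at this
    exact this
  -- formulas for the sub-distributions H₀ and H₁
  have hH0 : ∀ (S : Set ℝ≥0∞), MeasurableSet S →
      ((P.restrict {ω | A ω = 0}).map X) S
        = ENNReal.ofReal p * P {ω | T ω ∈ S ∧ T ω ≤ C ω} := by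
    intro S hS
    rw [Measure.map_apply hmX hS, Measure.restrict_apply (hmX hS)]
    have hset : X ⁻¹' S ∩ {ω | A ω = 0}
        = {ω | Δ ω = 1} ∩ W ⁻¹' {q : ℝ≥0∞ × ℝ≥0∞ | q.1 ∈ S ∧ q.1 ≤ q.2} := by
      ext ω
      simp only [Set.mem_inter_iff, Set.mem_preimage, Set.mem_setOf_eq, hA0]
      constructor
      · rintro ⟨hXS, hΔ1, hTC⟩
        have hXT := (model0 ω hTC hΔ1).1
        exact ⟨hΔ1, by show T ω ∈ S; rw [← hXT]; exact hXS, hTC⟩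
      · rintro ⟨hΔ1, hTS, hTC⟩
        have hXT := (model0 ω hTC hΔ1).1
        exact ⟨by rw [hXT]; exact hTS, hΔ1, hTC⟩
    have hQ : MeasurableSet {q : ℝ≥0∞ × ℝ≥0∞ | q.1 ∈ S ∧ q.1 ≤ q.2} := by
      have h1 : MeasurableSet {q : ℝ≥0∞ × ℝ≥0∞ | q.1 ∈ S} := hS.preimage measurable_fst
      have h2 : MeasurableSet {q : ℝ≥0∞ × ℝ≥0∞ | q.1 ≤ q.2} :=
        measurableSet_le measurable_fst measurable_snd
      exact h1.inter h2
    rw [hset, hΔmul _ hQ]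
    rfl
  have hH1 : ∀ (S : Set ℝ≥0∞), MeasurableSet S →
      ((P.restrict {ω | A ω = 1}).map X) S = P {ω | C ω ∈ S ∧ C ω < T ω} := by
    intro S hS
    rw [Measure.map_apply hmX hS, Measure.restrict_apply (hmX hS)]
    congr 1
    ext ω
    simp only [Set.mem_inter_iff, Set.mem_preimage, Set.mem_setOf_eq, hA1]
    constructor
    · rintro ⟨hXS, hCT⟩
      exact ⟨by rw [← (model1 ω hCT).1]; exact hXS, hCT⟩
    · rintro ⟨hCS, hCT⟩
      exact ⟨by rw [(model1 ω hCT).1]; exact hCS, hCT⟩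
  -- the key pointwise identity for the denominator
  have hkey : ∀ u : ℝ≥0∞,
      ((P.restrict {ω | A ω = 0}).map X) (Set.Ici u)
        + ENNReal.ofReal p * ((P.restrict {ω | A ω = 1}).map X) (Set.Ici u)
        = ENNReal.ofReal p * (ST u * SC u) := by
    intro u
    rw [hH0 _ measurableSet_Ici, hH1 _ measurableSet_Ici, ← mul_add]
    congr 1
    have hdisj : Disjoint {ω | T ω ∈ Set.Ici u ∧ T ω ≤ C ω}
        {ω | C ω ∈ Set.Ici u ∧ C ω < T ω} := by
      rw [Set.disjoint_left]
      rintro ω ⟨_, h1⟩ ⟨_, h2⟩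
      exact absurd h1 (not_le.mpr h2)
    have hmeas2 : MeasurableSet {ω | C ω ∈ Set.Ici u ∧ C ω < T ω} := by
      have h1 : MeasurableSet {ω | u ≤ C ω} := measurableSet_le measurable_const hmC
      have h2 : MeasurableSet {ω | C ω < T ω} := measurableSet_lt hmC hmT
      exact h1.inter h2
    have hunion : {ω | T ω ∈ Set.Ici u ∧ T ω ≤ C ω} ∪ {ω | C ω ∈ Set.Ici u ∧ C ω < T ω}
        = T ⁻¹' Set.Ici u ∩ C ⁻¹' Set.Ici u := by
      ext ω
      simp only [Set.mem_union, Set.mem_setOf_eq, Set.mem_inter_iff, Set.mem_preimage,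
        Set.mem_Ici]
      constructor
      · rintro (⟨h1, h2⟩ | ⟨h1, h2⟩)
        · exact ⟨h1, le_trans h1 h2⟩
        · exact ⟨le_trans h1 h2.le, h1⟩
      · rintro ⟨h1, h2⟩
        rcases le_or_gt (T ω) (C ω) with h | h
        · exact Or.inl ⟨h1, h⟩
        · exact Or.inr ⟨h2, h⟩
    calc P {ω | T ω ∈ Set.Ici u ∧ T ω ≤ C ω} + P {ω | C ω ∈ Set.Ici u ∧ C ω < T ω}
        = P ({ω | T ω ∈ Set.Ici u ∧ T ω ≤ C ω} ∪ {ω | C ω ∈ Set.Ici u ∧ C ω < T ω}) :=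
          (measure_union hdisj hmeas2).symm
      _ = P (T ⁻¹' Set.Ici u ∩ C ⁻¹' Set.Ici u) := by rw [hunion]
      _ = ST u * SC u := by
          rw [hindepTC.measure_inter_preimage_eq_mul _ _ measurableSet_Ici measurableSet_Ici]
          rfl
  -- unfolding the right-hand side
  have step1 : ∫⁻ u in Set.Iic c,
      (((P.restrict {ω | A ω = 0}).map X) (Set.Ici u)
        + ENNReal.ofReal p * ((P.restrict {ω | A ω = 1}).map X) (Set.Ici u))⁻¹
      ∂((P.restrict {ω | A ω = 0}).map X)
      = ∫⁻ u in Set.Iic c, g u ∂((P.restrict {ω | A ω = 0}).map X) :=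
    lintegral_congr fun u => by rw [hkey u]
  have step2 : ∫⁻ u in Set.Iic c, g u ∂((P.restrict {ω | A ω = 0}).map X)
      = ∫⁻ ω in X ⁻¹' Set.Iic c ∩ {ω | A ω = 0}, g (X ω) ∂P := by
    rw [setLIntegral_map measurableSet_Iic hgmeas hmX,
      Measure.restrict_restrict (hmX measurableSet_Iic)]
  set Q : Set (ℝ≥0∞ × ℝ≥0∞) := {q | q.1 ≤ q.2 ∧ q.1 ≤ c} with hQdef
  have hQmeas : MeasurableSet Q := by
    have h1 : MeasurableSet {q : ℝ≥0∞ × ℝ≥0∞ | q.1 ≤ q.2} :=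
      measurableSet_le measurable_fst measurable_snd
    have h2 : MeasurableSet {q : ℝ≥0∞ × ℝ≥0∞ | q.1 ≤ c} :=
      measurableSet_le measurable_fst measurable_const
    exact h1.inter h2
  have step3 : ∫⁻ ω in X ⁻¹' Set.Iic c ∩ {ω | A ω = 0}, g (X ω) ∂P
      = ∫⁻ ω in {ω | Δ ω = 1} ∩ W ⁻¹' Q, g (T ω) ∂P := by
    have hE : X ⁻¹' Set.Iic c ∩ {ω | A ω = 0} = {ω | Δ ω = 1} ∩ W ⁻¹' Q := by
      ext ω
      simp only [Set.mem_inter_iff, Set.mem_preimage, Set.mem_Iic, Set.mem_setOf_eq, hA0,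
        hQdef]
      constructor
      · rintro ⟨hXc, hΔ1, hTC⟩
        have hXT := (model0 ω hTC hΔ1).1
        exact ⟨hΔ1, hTC, by show T ω ≤ c; rw [← hXT]; exact hXc⟩
      · rintro ⟨hΔ1, hTC, hTc⟩
        have hXT := (model0 ω hTC hΔ1).1
        exact ⟨by rw [hXT]; exact hTc, hΔ1, hTC⟩
    rw [hE]
    refine setLIntegral_congr_fun (hsetΔ.inter (hmW hQmeas)) ?_
    rintro ω ⟨hΔ1, hTC, hTc⟩
    show g (X ω) = g (T ω)
    rw [(model0 ω hTC hΔ1).1]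
  set φ : ℕ → ℝ≥0∞ := ({1} : Set ℕ).indicator 1 with hφdef
  set ψ : ℝ≥0∞ × ℝ≥0∞ → ℝ≥0∞ := Q.indicator (fun q => g q.1) with hψdef
  have hφmeas : Measurable φ := measurable_one.indicator (measurableSet_singleton 1)
  have hψmeas : Measurable ψ := (hgmeas.comp measurable_fst).indicator hQmeas
  have step4 : ∫⁻ ω in {ω | Δ ω = 1} ∩ W ⁻¹' Q, g (T ω) ∂P
      = (∫⁻ ω, φ (Δ ω) ∂P) * ∫⁻ ω, ψ (W ω) ∂P := by
    rw [← lintegral_indicator (hsetΔ.inter (hmW hQmeas))]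
    have hfun : (({ω | Δ ω = 1} ∩ W ⁻¹' Q).indicator fun ω => g (T ω))
        = fun ω => φ (Δ ω) * ψ (W ω) := by
      funext ω
      by_cases h1 : Δ ω = 1 <;> by_cases h2 : W ω ∈ Q <;>
        simp [hφdef, hψdef, Set.indicator_apply, h1, h2] <;> rfl
    rw [hfun]
    exact lintegral_mul_eq_lintegral_mul_lintegral_of_indepFun
      (hφmeas.comp hmΔ) (hψmeas.comp hmW) (hindepΔ.comp hφmeas hψmeas)
  have hφint : ∫⁻ ω, φ (Δ ω) ∂P = ENNReal.ofReal p := by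
    have h1 : (fun ω => φ (Δ ω)) = ({ω | Δ ω = 1} : Set Ω).indicator 1 := by
      funext ω
      by_cases h : Δ ω = 1 <;> simp [hφdef, Set.indicator_apply, h]
    rw [h1, lintegral_indicator_one hsetΔ, hpΔ]
  haveI hμT : IsProbabilityMeasure (P.map T) := Measure.isProbabilityMeasure_map hmT.aemeasurable
  haveI hμC : IsProbabilityMeasure (P.map C) := Measure.isProbabilityMeasure_map hmC.aemeasurable
  have hjoint : P.map W = (P.map T).prod (P.map C) :=
    (indepFun_iff_map_prod_eq_prod_map_map hmT.aemeasurable hmC.aemeasurable).mp hindepTC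
  have hψint : ∫⁻ ω, ψ (W ω) ∂P = ∫⁻ u in Set.Iic c, g u * SC u ∂(P.map T) := by
    rw [← lintegral_map hψmeas hmW, hjoint, lintegral_prod _ hψmeas.aemeasurable,
      ← lintegral_indicator measurableSet_Iic]
    congr 1
    funext u
    by_cases hu : u ≤ c
    · have hv : (fun v => ψ (u, v)) = (Set.Ici u).indicator (fun _ => g u) := by
        funext v
        by_cases hvv : u ≤ v <;> simp [hψdef, hQdef, Set.indicator_apply, hu, hvv]
      rw [hv, lintegral_indicator measurableSet_Ici, setLIntegral_const,
        Set.indicator_of_mem (show u ∈ Set.Iic c from hu)]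
      congr 1
      rw [Measure.map_apply hmC measurableSet_Ici]
      rfl
    · have hv : (fun v => ψ (u, v)) = fun _ => (0 : ℝ≥0∞) := by
        funext v
        simp [hψdef, hQdef, Set.indicator_apply, hu]
      rw [hv, lintegral_zero, Set.indicator_of_notMem (show u ∉ Set.Iic c from hu)]
  have step5 : ENNReal.ofReal p * ∫⁻ u in Set.Iic c, g u * SC u ∂(P.map T)
      = ∫⁻ u in Set.Iic c, (ST u)⁻¹ ∂(P.map T) := by
    rw [← lintegral_const_mul _ (f := fun u => g u * SC u) (hgmeas.mul hSCmeas)]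
    refine setLIntegral_congr_fun measurableSet_Iic (fun u hu => ?_)
    have hp0' : ENNReal.ofReal p ≠ 0 := (ENNReal.ofReal_pos.mpr hp0).ne'
    have hptop : ENNReal.ofReal p ≠ ∞ := ENNReal.ofReal_ne_top
    have hST0 : ST u ≠ 0 := by
      exact (lt_of_lt_of_le hT (measure_mono fun ω (hω : c < T ω) =>
        (le_trans hu hω.le : u ≤ T ω))).ne'
    have hSTtop : ST u ≠ ∞ := measure_ne_top P _
    have hSC0 : SC u ≠ 0 :=
      (lt_of_lt_of_le hC (measure_mono fun ω (hω : c ≤ C ω) => (le_trans hu hω : u ≤ C ω))).ne'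
    have hSCtop : SC u ≠ ∞ := measure_ne_top P _
    calc ENNReal.ofReal p * (g u * SC u)
        = (ENNReal.ofReal p * (ENNReal.ofReal p)⁻¹) * (SC u * (SC u)⁻¹) * (ST u)⁻¹ := by
          simp only [hgdef]
          rw [ENNReal.mul_inv (Or.inl hp0') (Or.inl hptop),
            ENNReal.mul_inv (Or.inl hST0) (Or.inl hSTtop)]
          ring
      _ = (ST u)⁻¹ := by
          rw [ENNReal.mul_inv_cancel hp0' hptop, ENNReal.mul_inv_cancel hSC0 hSCtop,
            one_mul, one_mul]
  -- change of variables to the Lebesgue density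
  set ν : Measure ℝ := (volume.restrict (Set.Icc 0 t)).withDensity f with hνdef
  have hrestr : (P.map T).restrict (Set.Iic c) = ν.map ENNReal.ofReal := by
    ext S hS
    rw [Measure.restrict_apply hS, Measure.map_apply hmT (hS.inter measurableSet_Iic),
      Measure.map_apply ENNReal.measurable_ofReal hS, hνdef,
      withDensity_apply _ (ENNReal.measurable_ofReal hS),
      Measure.restrict_restrict (ENNReal.measurable_ofReal hS),
      ← hdens _ ((ENNReal.measurable_ofReal hS).inter measurableSet_Icc)
        (fun s hs => hs.2.1)]
    congr 1
    ext ω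
    simp only [Set.mem_preimage, Set.mem_inter_iff, Set.mem_Iic, Set.mem_Icc,
      Set.mem_setOf_eq]
    constructor
    · rintro ⟨hS', hc⟩
      have hne : T ω ≠ ∞ := (lt_of_le_of_lt hc ENNReal.ofReal_lt_top).ne
      refine ⟨hne, ?_, ENNReal.toReal_nonneg, ?_⟩
      · rw [ENNReal.ofReal_toReal hne]; exact hS'
      · exact ENNReal.toReal_le_of_le_ofReal ht hc
    · rintro ⟨hne, hS', h0, hle⟩
      have hTw : T ω = ENNReal.ofReal (T ω).toReal := (ENNReal.ofReal_toReal hne).symm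
      constructor
      · rw [hTw]; exact hS'
      · rw [hTw]; exact ENNReal.ofReal_le_ofReal hle
  have hFmeas : Measurable fun u : ℝ≥0∞ => (ST u)⁻¹ := hSTmeas.inv
  have step6 : ∫⁻ u in Set.Iic c, (ST u)⁻¹ ∂(P.map T)
      = ∫⁻ s in Set.Icc (0:ℝ) t, f s * (ST (ENNReal.ofReal s))⁻¹ ∂volume := by
    rw [show (∫⁻ u in Set.Iic c, (ST u)⁻¹ ∂(P.map T))
        = ∫⁻ u, (ST u)⁻¹ ∂((P.map T).restrict (Set.Iic c)) from rfl,
      hrestr, lintegral_map hFmeas ENNReal.measurable_ofReal, hνdef,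
      lintegral_withDensity_eq_lintegral_mul _ hf (g := fun a => (ST (ENNReal.ofReal a))⁻¹) (hFmeas.comp ENNReal.measurable_ofReal)]
    rfl
  -- no atom at finite points
  have hatom : ∀ s : ℝ, 0 ≤ s →
      P {ω | ENNReal.ofReal s < T ω} = ST (ENNReal.ofReal s) := by
    intro s hs
    have hzero : P {ω | T ω = ENNReal.ofReal s} = 0 := by
      have hset : {ω | T ω = ENNReal.ofReal s}
          = {ω | T ω ≠ ∞ ∧ (T ω).toReal ∈ ({s} : Set ℝ)} := by
        ext ω
        simp only [Set.mem_setOf_eq, Set.mem_singleton_iff]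
        constructor
        · intro h
          have hne : T ω ≠ ∞ := by rw [h]; exact ENNReal.ofReal_ne_top
          exact ⟨hne, by rw [h, ENNReal.toReal_ofReal hs]⟩
        · rintro ⟨hne, h⟩
          rw [← ENNReal.ofReal_toReal hne, h]
      rw [hset, hdens _ (measurableSet_singleton s) (by rintro x rfl; exact hs),
        Measure.restrict_eq_zero.mpr Real.volume_singleton, lintegral_zero_measure]
    have hsub : {ω | ENNReal.ofReal s ≤ T ω}
        ⊆ {ω | ENNReal.ofReal s < T ω} ∪ {ω | T ω = ENNReal.ofReal s} := by
      intro ω (h : ENNReal.ofReal s ≤ T ω)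
      rcases lt_or_eq_of_le h with h' | h'
      · exact Or.inl h'
      · exact Or.inr h'.symm
    simp only [hSTdef]
    refine le_antisymm (measure_mono fun ω (h : ENNReal.ofReal s < T ω) => (le_of_lt h : ENNReal.ofReal s ≤ T ω)) ?_
    calc P {ω | ENNReal.ofReal s ≤ T ω}
        ≤ P ({ω | ENNReal.ofReal s < T ω} ∪ {ω | T ω = ENNReal.ofReal s}) :=
          measure_mono hsub
      _ ≤ P {ω | ENNReal.ofReal s < T ω} + P {ω | T ω = ENNReal.ofReal s} :=
          measure_union_le _ _
      _ = P {ω | ENNReal.ofReal s < T ω} := by rw [hzero, add_zero]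
  calc ∫⁻ s in Set.Icc (0:ℝ) t, f s * (P {ω | ENNReal.ofReal s < T ω})⁻¹ ∂volume
      = ∫⁻ s in Set.Icc (0:ℝ) t, f s * (ST (ENNReal.ofReal s))⁻¹ ∂volume := by
        refine setLIntegral_congr_fun measurableSet_Icc
          (fun s hs => ?_)
        rw [hatom s hs.1]
    _ = ∫⁻ u in Set.Iic c, (ST u)⁻¹ ∂(P.map T) := step6.symm
    _ = ENNReal.ofReal p * ∫⁻ u in Set.Iic c, g u * SC u ∂(P.map T) := step5.symm
    _ = (∫⁻ ω, φ (Δ ω) ∂P) * ∫⁻ ω, ψ (W ω) ∂P := by rw [hφint, hψint]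
    _ = ∫⁻ ω in {ω | Δ ω = 1} ∩ W ⁻¹' Q, g (T ω) ∂P := step4.symm
    _ = ∫⁻ ω in X ⁻¹' Set.Iic c ∩ {ω | A ω = 0}, g (X ω) ∂P := step3.symm
    _ = ∫⁻ u in Set.Iic c, g u ∂((P.restrict {ω | A ω = 0}).map X) := step2.symm
    _ = _ := step1.symm
end

section
/- Let (X_i,A_i,Z_i), i≥1, be i.i.d. copies of a random triple (X,A,Z) with values in [0,∞)×{0,1,2}×ℝ^q such that ‖Z‖≤c almost surely, let B⊂ℝ^q be compact, let 0<ε<1/2 and τ>0. Then for l=0 and l=1, sup over p∈[ε,1−ε], β∈B, and t∈[0,τ] of ‖E_n^{(l)}(t;p,β) − e^{(l)}(t;p,β)‖ converges to 0 in probability as n→∞, where e^{(l)}(t;p,β)=E[e^{β·Z}Z^{⊗l}(1(X≥t,A=0)+p·1(X≥t,A=1))] (Z^{⊗0}=1, Z^{⊗1}=Z). -/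
open MeasureTheory ProbabilityTheory Filter Topology

noncomputable section

/-- Empirical functional `E_n^{(0)}(t;p,β)`. -/
def En0 {Ω : Type*} {q : ℕ} (X : ℕ → Ω → ℝ) (A : ℕ → Ω → ℕ)
    (Z : ℕ → Ω → EuclideanSpace ℝ (Fin q)) (n : ℕ) (t p : ℝ)
    (β : EuclideanSpace ℝ (Fin q)) (ω : Ω) : ℝ :=
  (n : ℝ)⁻¹ * ∑ i ∈ Finset.range n, Real.exp ((inner ℝ β (Z i ω) : ℝ)) *
    ((if t ≤ X i ω ∧ A i ω = 0 then 1 else 0) + p * (if t ≤ X i ω ∧ A i ω = 1 then 1 else 0))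

/-- Empirical functional `E_n^{(1)}(t;p,β)` (vector valued). -/
def En1 {Ω : Type*} {q : ℕ} (X : ℕ → Ω → ℝ) (A : ℕ → Ω → ℕ)
    (Z : ℕ → Ω → EuclideanSpace ℝ (Fin q)) (n : ℕ) (t p : ℝ)
    (β : EuclideanSpace ℝ (Fin q)) (ω : Ω) : EuclideanSpace ℝ (Fin q) :=
  (n : ℝ)⁻¹ • ∑ i ∈ Finset.range n, (Real.exp ((inner ℝ β (Z i ω) : ℝ)) *
    ((if t ≤ X i ω ∧ A i ω = 0 then 1 else 0) +
      p * (if t ≤ X i ω ∧ A i ω = 1 then 1 else 0))) • Z i ω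

/-- Population functional `e^{(0)}(t;p,β)`. -/
def e0pop {Ω : Type*} [MeasurableSpace Ω] (P : Measure Ω) {q : ℕ} (X : Ω → ℝ) (A : Ω → ℕ)
    (Z : Ω → EuclideanSpace ℝ (Fin q)) (t p : ℝ) (β : EuclideanSpace ℝ (Fin q)) : ℝ :=
  ∫ ω, Real.exp ((inner ℝ β (Z ω) : ℝ)) *
    ((if t ≤ X ω ∧ A ω = 0 then 1 else 0) + p * (if t ≤ X ω ∧ A ω = 1 then 1 else 0)) ∂P

/-- Population functional `e^{(1)}(t;p,β)` (vector valued). -/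
def e1pop {Ω : Type*} [MeasurableSpace Ω] (P : Measure Ω) {q : ℕ} (X : Ω → ℝ) (A : Ω → ℕ)
    (Z : Ω → EuclideanSpace ℝ (Fin q)) (t p : ℝ) (β : EuclideanSpace ℝ (Fin q)) :
    EuclideanSpace ℝ (Fin q) :=
  ∫ ω, (Real.exp ((inner ℝ β (Z ω) : ℝ)) *
    ((if t ≤ X ω ∧ A ω = 0 then 1 else 0) +
      p * (if t ≤ X ω ∧ A ω = 1 then 1 else 0))) • Z ω ∂P

namespace EnLLNAux

lemma exp_lip {K a b : ℝ} (ha : a ≤ K) (hb : b ≤ K) :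
    |Real.exp a - Real.exp b| ≤ Real.exp K * |a - b| := by
  wlog h : b ≤ a generalizing a b
  · rw [abs_sub_comm, abs_sub_comm a b]; exact this hb ha (le_of_not_ge h)
  rw [abs_of_nonneg (sub_nonneg.2 (Real.exp_le_exp.2 h)), abs_of_nonneg (sub_nonneg.2 h)]
  have h1 : Real.exp b * Real.exp (a - b) = Real.exp a := by rw [← Real.exp_add]; ring_nf
  have h2 : 1 - (a - b) ≤ Real.exp (-(a - b)) := by
    have := Real.add_one_le_exp (-(a - b)); linarith
  have h3 : Real.exp (-(a-b)) * Real.exp (a-b) = 1 := by rw [← Real.exp_add]; simp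
  have h5 : (0:ℝ) < Real.exp (a - b) := Real.exp_pos _
  have h6 : (0:ℝ) < Real.exp b := Real.exp_pos _
  have h7 : Real.exp (a-b) - 1 ≤ (a-b) * Real.exp (a-b) := by
    nlinarith [mul_le_mul_of_nonneg_right h2 h5.le]
  have h8 : Real.exp a - Real.exp b ≤ (a-b) * Real.exp a := by
    nlinarith [mul_le_mul_of_nonneg_left h7 h6.le]
  have h9 : (a-b) * Real.exp a ≤ (a-b) * Real.exp K :=
    mul_le_mul_of_nonneg_left (Real.exp_le_exp.2 ha) (sub_nonneg.2 h)
  linarith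

lemma coord_abs_le_norm {q : ℕ} (z : EuclideanSpace ℝ (Fin q)) (j : Fin q) : |z j| ≤ ‖z‖ := by
  rw [EuclideanSpace.norm_eq]
  calc |z j| = Real.sqrt (‖z j‖^2) := by rw [Real.sqrt_sq_eq_abs]; simp
  _ ≤ _ := Real.sqrt_le_sqrt (Finset.single_le_sum (f := fun i => ‖z i‖^2)
      (fun i _ => by positivity) (Finset.mem_univ j))

lemma norm_le_sum_abs {q : ℕ} (v : EuclideanSpace ℝ (Fin q)) : ‖v‖ ≤ ∑ j, |v j| := by
  rw [EuclideanSpace.norm_eq]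
  have h1 : ∑ i, ‖v i‖^2 ≤ (∑ j, |v j|)^2 := by
    simpa [Real.norm_eq_abs] using Finset.sum_sq_le_sq_sum_of_nonneg (s := Finset.univ)
      (f := fun j => |v j|) (fun i _ => abs_nonneg _)
  calc Real.sqrt (∑ i, ‖v i‖^2) ≤ Real.sqrt ((∑ j, |v j|)^2) := Real.sqrt_le_sqrt h1
  _ = _ := Real.sqrt_sq (by positivity)

lemma grid_exists {H Hs : ℝ → ℝ} {τ η : ℝ} (hτ : 0 < τ) (hη : 0 < η)
    (hmono : ∀ ⦃s t : ℝ⦄, s ≤ t → H t ≤ H s)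
    (hsle : ∀ t, Hs t ≤ H t)
    (h0 : ∀ t, 0 ≤ Hs t)
    (hlc : ∀ t : ℝ, Tendsto H (𝓝[<] t) (𝓝 (H t)))
    (hrc : ∀ t : ℝ, Tendsto H (𝓝[>] t) (𝓝 (Hs t))) :
    ∃ T : Finset ℝ, (↑T ⊆ Set.Icc 0 τ) ∧ ∀ u ∈ Set.Icc 0 τ, u ∈ T ∨
      ∃ a ∈ T, ∃ b ∈ T, a < u ∧ u ≤ b ∧ Hs a - η ≤ H b := by
  classical
  set S : ℝ → Set ℝ := fun a => {s | s ∈ Set.Icc a τ ∧ Hs a - η ≤ H s} with hS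
  have hSmem : ∀ a, a ∈ Set.Icc 0 τ → a ∈ S a := fun a ha =>
    ⟨⟨le_refl a, ha.2⟩, by linarith [hsle a]⟩
  have hSbdd : ∀ a, BddAbove (S a) := fun a => ⟨τ, fun s hs => hs.1.2⟩
  -- the recursively defined grid sequence
  let t : ℕ → ℝ := fun k => Nat.rec (motive := fun _ => ℝ) 0 (fun _ tk => sSup (S tk)) k
  have ht0 : t 0 = 0 := rfl
  have htsucc : ∀ k, t (k + 1) = sSup (S (t k)) := fun k => rfl
  -- step facts
  have hstep : ∀ a, a ∈ Set.Icc 0 τ →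
      a ≤ sSup (S a) ∧ sSup (S a) ≤ τ ∧ (Hs a - η ≤ H (sSup (S a))) ∧
        (sSup (S a) < τ → Hs (sSup (S a)) ≤ Hs a - η) := by
    intro a ha
    have hne : (S a).Nonempty := ⟨a, hSmem a ha⟩
    have hab : a ≤ sSup (S a) := le_csSup (hSbdd a) (hSmem a ha)
    have hbτ : sSup (S a) ≤ τ := csSup_le hne fun s hs => hs.1.2
    refine ⟨hab, hbτ, ?_, ?_⟩
    · refine ge_of_tendsto (hlc (sSup (S a))) ?_
      filter_upwards [self_mem_nhdsWithin] with s hs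
      obtain ⟨x, hx, hsx⟩ := exists_lt_of_lt_csSup hne hs
      exact le_trans hx.2 (hmono hsx.le)
    · intro hlt
      refine le_of_tendsto (hrc (sSup (S a))) ?_
      filter_upwards [Ioo_mem_nhdsGT_of_mem ⟨le_refl (sSup (S a)), hlt⟩] with s hs
      by_contra hcon
      push_neg at hcon
      exact absurd (le_csSup (hSbdd a) ⟨⟨hab.trans hs.1.le, hs.2.le⟩, hcon.le⟩) (not_le.2 hs.1)
  have htmem : ∀ k, t k ∈ Set.Icc 0 τ := by
    intro k
    induction k with
    | zero => exact ⟨le_refl 0, hτ.le⟩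
    | succ k ih =>
      rw [htsucc]
      exact ⟨(ih.1.trans (hstep _ ih).1), (hstep _ ih).2.1⟩
  have htmono : ∀ k, t k ≤ t (k + 1) := fun k => by
    rw [htsucc]; exact (hstep _ (htmem k)).1
  have hterm : ∃ k, t k = τ := by
    by_contra hcon
    push_neg at hcon
    have hlt : ∀ k, t k < τ := fun k => lt_of_le_of_ne (htmem k).2 (hcon k)
    have hdec : ∀ k : ℕ, Hs (t k) ≤ Hs 0 - k * η := by
      intro k
      induction k with
      | zero => simp [ht0]
      | succ k ih =>
        have h2 : Hs (t (k+1)) ≤ Hs (t k) - η := by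
          rw [htsucc]
          exact (hstep _ (htmem k)).2.2.2 (by rw [← htsucc]; exact hlt (k+1))
        push_cast
        linarith
    obtain ⟨k, hk⟩ := exists_nat_gt (Hs 0 / η)
    have := hdec k
    have h3 : Hs 0 / η < k := hk
    have h4 : Hs 0 < k * η := by
      rw [div_lt_iff₀ hη] at h3; linarith
    linarith [h0 (t k)]
  let K := Nat.find hterm
  have hK : t K = τ := Nat.find_spec hterm
  refine ⟨(Finset.range (K + 1)).image t, ?_, ?_⟩
  · intro x hx
    simp only [Finset.coe_image, Set.mem_image] at hx
    obtain ⟨k, _, rfl⟩ := hx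
    exact htmem k
  · intro u hu
    by_cases huT : u ∈ (Finset.range (K + 1)).image t
    · exact Or.inl huT
    · right
      have hneq : ∀ k, k < K + 1 → t k ≠ u := by
        intro k hk hke
        exact huT (Finset.mem_image.2 ⟨k, Finset.mem_range.2 hk, hke⟩)
      have h0u : 0 < u := lt_of_le_of_ne hu.1 fun h => hneq 0 (Nat.succ_pos K) (h ▸ ht0)
      set I := (Finset.range (K + 1)).filter (fun k => t k < u) with hI
      have hI0 : 0 ∈ I := Finset.mem_filter.2 ⟨Finset.mem_range.2 (Nat.succ_pos K), by rw [ht0]; exact h0u⟩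
      have hIne : I.Nonempty := ⟨0, hI0⟩
      set k₀ := I.max' hIne with hk₀
      have hk₀I : k₀ ∈ I := I.max'_mem hIne
      have hk₀lt : t k₀ < u := (Finset.mem_filter.1 hk₀I).2
      have hk₀K : k₀ < K := by
        have h1 : k₀ < K + 1 := Finset.mem_range.1 (Finset.mem_filter.1 hk₀I).1
        rcases lt_or_eq_of_le (Nat.lt_succ_iff.1 h1) with h | h
        · exact h
        · exfalso; rw [h, hK] at hk₀lt; exact absurd hu.2 (not_le.2 hk₀lt)
      have hub : u ≤ t (k₀ + 1) := by
        by_contra hcon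
        push_neg at hcon
        have : k₀ + 1 ∈ I := Finset.mem_filter.2 ⟨Finset.mem_range.2 (by omega), hcon⟩
        exact absurd (I.le_max' _ this) (by omega)
      refine ⟨t k₀, Finset.mem_image.2 ⟨k₀, Finset.mem_range.2 (by omega), rfl⟩,
        t (k₀ + 1), Finset.mem_image.2 ⟨k₀ + 1, Finset.mem_range.2 (by omega), rfl⟩,
        hk₀lt, hub, ?_⟩
      rw [htsucc]
      exact (hstep _ (htmem k₀)).2.2.1

lemma slln_comp {Ω : Type*} [MeasurableSpace Ω] (P : Measure Ω) [IsProbabilityMeasure P]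
    {E : Type*} [MeasurableSpace E] (Y : ℕ → Ω → E)
    (hmeas : ∀ i, Measurable (Y i))
    (hindep : iIndepFun Y P)
    (hident : ∀ i, IdentDistrib (Y i) (Y 0) P P)
    (φ : E → ℝ) (hφ : Measurable φ) (C : ℝ) (hbd : ∀ᵐ ω ∂P, |φ (Y 0 ω)| ≤ C) :
    ∀ᵐ ω ∂P, Tendsto (fun n : ℕ => (n : ℝ)⁻¹ * ∑ i ∈ Finset.range n, φ (Y i ω))
      atTop (𝓝 (∫ ω', φ (Y 0 ω') ∂P)) := by
  have hint : Integrable (fun ω => φ (Y 0 ω)) P := by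
    refine Integrable.mono' (integrable_const C) ((hφ.comp (hmeas 0)).aestronglyMeasurable) ?_
    filter_upwards [hbd] with ω h using by simpa [Real.norm_eq_abs] using h
  have h := strong_law_ae_real (fun i ω => φ (Y i ω)) hint
    (fun i j hij => (hindep.indepFun hij).comp hφ hφ)
    (fun i => (hident i).comp hφ)
  filter_upwards [h] with ω hω
  refine hω.congr fun n => ?_
  rw [div_eq_inv_mul]



/-- condition selector -/
def CD (b : Bool) (t x : ℝ) : Prop := bif b then t < x else t ≤ x

def fF {q : ℕ} (w : EuclideanSpace ℝ (Fin q) → EuclideanSpace ℝ (Fin q) → ℝ)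
    (b : Bool) (t : ℝ) (κ : ℝ × EuclideanSpace ℝ (Fin q))
    (y : ℝ × ℕ × EuclideanSpace ℝ (Fin q)) : ℝ :=
  bif b then
    w κ.2 y.2.2 * ((if t < y.1 ∧ y.2.1 = 0 then 1 else 0)
      + κ.1 * (if t < y.1 ∧ y.2.1 = 1 then 1 else 0))
  else
    w κ.2 y.2.2 * ((if t ≤ y.1 ∧ y.2.1 = 0 then 1 else 0)
      + κ.1 * (if t ≤ y.1 ∧ y.2.1 = 1 then 1 else 0))

lemma ind_mem {Pp : Prop} [Decidable Pp] : (if Pp then (1:ℝ) else 0) ∈ Set.Icc (0:ℝ) 1 := by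
  split_ifs <;> norm_num

lemma ind_le_ind {Pp Qp : Prop} [Decidable Pp] [Decidable Qp] (h : Pp → Qp) :
    (if Pp then (1:ℝ) else 0) ≤ (if Qp then 1 else 0) := by
  split_ifs with h1 h2 <;> first | exact absurd (h h1) h2 | norm_num

lemma fF_meas {q : ℕ} (w : EuclideanSpace ℝ (Fin q) → EuclideanSpace ℝ (Fin q) → ℝ)
    (hw : ∀ β, Measurable (w β)) (b : Bool) (t : ℝ) (κ : ℝ × EuclideanSpace ℝ (Fin q)) :
    Measurable (fF w b t κ) := by
  have hw' : Measurable fun y : ℝ × ℕ × EuclideanSpace ℝ (Fin q) => w κ.2 y.2.2 :=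
    (hw κ.2).comp (measurable_snd.comp measurable_snd)
  have hA0 : MeasurableSet {y : ℝ × ℕ × EuclideanSpace ℝ (Fin q) | y.2.1 = 0} :=
    (measurable_fst.comp measurable_snd) (measurableSet_singleton 0)
  have hA1 : MeasurableSet {y : ℝ × ℕ × EuclideanSpace ℝ (Fin q) | y.2.1 = 1} :=
    (measurable_fst.comp measurable_snd) (measurableSet_singleton 1)
  have hle : MeasurableSet {y : ℝ × ℕ × EuclideanSpace ℝ (Fin q) | t ≤ y.1} :=
    measurableSet_le measurable_const measurable_fst
  have hlt : MeasurableSet {y : ℝ × ℕ × EuclideanSpace ℝ (Fin q) | t < y.1} :=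
    measurableSet_lt measurable_const measurable_fst
  cases b <;> unfold fF <;> simp only [Bool.cond_false, Bool.cond_true]
  · exact hw'.mul ((Measurable.ite (hle.inter hA0) measurable_const measurable_const).add
      (measurable_const.mul (Measurable.ite (hle.inter hA1) measurable_const measurable_const)))
  · exact hw'.mul ((Measurable.ite (hlt.inter hA0) measurable_const measurable_const).add
      (measurable_const.mul (Measurable.ite (hlt.inter hA1) measurable_const measurable_const)))

lemma fF_mem {q : ℕ} {w : EuclideanSpace ℝ (Fin q) → EuclideanSpace ℝ (Fin q) → ℝ}
    {M : ℝ} {b : Bool} {t : ℝ} {κ : ℝ × EuclideanSpace ℝ (Fin q)}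
    {y : ℝ × ℕ × EuclideanSpace ℝ (Fin q)}
    (hw0 : 0 ≤ w κ.2 y.2.2) (hwM : w κ.2 y.2.2 ≤ M) (hp0 : 0 ≤ κ.1) (hp1 : κ.1 ≤ 1) :
    fF w b t κ y ∈ Set.Icc 0 (2 * M) := by
  have key : ∀ i0 i1 : ℝ, i0 ∈ Set.Icc (0:ℝ) 1 → i1 ∈ Set.Icc (0:ℝ) 1 →
      w κ.2 y.2.2 * (i0 + κ.1 * i1) ∈ Set.Icc 0 (2 * M) := by
    rintro i0 i1 ⟨h00, h01⟩ ⟨h10, h11⟩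
    constructor
    · positivity
    · nlinarith [mul_le_mul hwM (show i0 + κ.1 * i1 ≤ 2 by nlinarith) (by positivity) (le_trans hw0 hwM)]
  cases b <;> unfold fF <;> simp only [Bool.cond_false, Bool.cond_true] <;>
    exact key _ _ ind_mem ind_mem

lemma fF_mono {q : ℕ} {w : EuclideanSpace ℝ (Fin q) → EuclideanSpace ℝ (Fin q) → ℝ}
    {b b' : Bool} {t t' : ℝ} {κ : ℝ × EuclideanSpace ℝ (Fin q)}
    {y : ℝ × ℕ × EuclideanSpace ℝ (Fin q)}
    (hw0 : 0 ≤ w κ.2 y.2.2) (hp0 : 0 ≤ κ.1)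
    (h : ∀ x : ℝ, CD b t x → CD b' t' x) :
    fF w b t κ y ≤ fF w b' t' κ y := by
  have h' := h y.1
  unfold CD at h'
  cases b <;> cases b' <;>
    unfold fF <;> simp only [Bool.cond_false, Bool.cond_true] at h' ⊢ <;>
    exact mul_le_mul_of_nonneg_left
      (add_le_add (ind_le_ind fun hc => ⟨h' hc.1, hc.2⟩)
        (mul_le_mul_of_nonneg_left (ind_le_ind fun hc => ⟨h' hc.1, hc.2⟩) hp0)) hw0

lemma fF_lip {q : ℕ} {w : EuclideanSpace ℝ (Fin q) → EuclideanSpace ℝ (Fin q) → ℝ}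
    {M L : ℝ} {t : ℝ} {κ κ' : ℝ × EuclideanSpace ℝ (Fin q)}
    {y : ℝ × ℕ × EuclideanSpace ℝ (Fin q)}
    (hw0' : 0 ≤ w κ'.2 y.2.2) (hwM' : w κ'.2 y.2.2 ≤ M)
    (hp0 : 0 ≤ κ.1) (hp1 : κ.1 ≤ 1)
    (hΔw : |w κ.2 y.2.2 - w κ'.2 y.2.2| ≤ L * ‖κ.2 - κ'.2‖) :
    |fF w false t κ y - fF w false t κ' y| ≤ 2 * (L * ‖κ.2 - κ'.2‖) + M * |κ.1 - κ'.1| := by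
  unfold fF
  simp only [Bool.cond_false]
  set i0 := (if t ≤ y.1 ∧ y.2.1 = 0 then (1:ℝ) else 0) with hi0d
  set i1 := (if t ≤ y.1 ∧ y.2.1 = 1 then (1:ℝ) else 0) with hi1d
  have hi0 : i0 ∈ Set.Icc (0:ℝ) 1 := ind_mem
  have hi1 : i1 ∈ Set.Icc (0:ℝ) 1 := ind_mem
  have he : w κ.2 y.2.2 * (i0 + κ.1 * i1) - w κ'.2 y.2.2 * (i0 + κ'.1 * i1)
      = (w κ.2 y.2.2 - w κ'.2 y.2.2) * (i0 + κ.1 * i1)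
        + w κ'.2 y.2.2 * ((κ.1 - κ'.1) * i1) := by ring
  rw [he]
  calc |(w κ.2 y.2.2 - w κ'.2 y.2.2) * (i0 + κ.1 * i1) + w κ'.2 y.2.2 * ((κ.1 - κ'.1) * i1)|
      ≤ |(w κ.2 y.2.2 - w κ'.2 y.2.2) * (i0 + κ.1 * i1)| + |w κ'.2 y.2.2 * ((κ.1 - κ'.1) * i1)| :=
        abs_add_le _ _
    _ ≤ (L * ‖κ.2 - κ'.2‖) * 2 + M * |κ.1 - κ'.1| := by
        rw [abs_mul, abs_mul, abs_mul]
        have h1 : |i0 + κ.1 * i1| ≤ 2 := by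
          rw [abs_of_nonneg (by nlinarith [hi0.1, hi1.1])]
          nlinarith [hi0.2, hi1.2, hi1.1]
        have h2 : |κ.1 - κ'.1| * |i1| ≤ |κ.1 - κ'.1| := by
          have := abs_nonneg (κ.1 - κ'.1)
          have hi1' : |i1| ≤ 1 := by rw [abs_of_nonneg hi1.1]; exact hi1.2
          nlinarith [abs_nonneg i1]
        have h3 : |w κ'.2 y.2.2| ≤ M := by rw [abs_of_nonneg hw0']; exact hwM'
        have hM0 : (0:ℝ) ≤ M := le_trans hw0' hwM'
        have t1 : |w κ.2 y.2.2 - w κ'.2 y.2.2| * |i0 + κ.1 * i1| ≤ (L * ‖κ.2 - κ'.2‖) * 2 :=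
          mul_le_mul hΔw h1 (abs_nonneg _) (le_trans (abs_nonneg _) hΔw)
        have t2 : |w κ'.2 y.2.2| * (|κ.1 - κ'.1| * |i1|) ≤ M * |κ.1 - κ'.1| :=
          mul_le_mul h3 h2 (by positivity) hM0
        linarith
    _ = 2 * (L * ‖κ.2 - κ'.2‖) + M * |κ.1 - κ'.1| := by ring


variable {Ω : Type*} [MeasurableSpace Ω] {q : ℕ}

def GnF (w : EuclideanSpace ℝ (Fin q) → EuclideanSpace ℝ (Fin q) → ℝ) (b : Bool)
    (X : ℕ → Ω → ℝ) (A : ℕ → Ω → ℕ) (Z : ℕ → Ω → EuclideanSpace ℝ (Fin q))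
    (n : ℕ) (t : ℝ) (κ : ℝ × EuclideanSpace ℝ (Fin q)) (ω : Ω) : ℝ :=
  (n : ℝ)⁻¹ * ∑ i ∈ Finset.range n, fF w b t κ (X i ω, A i ω, Z i ω)

def gF (P : Measure Ω) (w : EuclideanSpace ℝ (Fin q) → EuclideanSpace ℝ (Fin q) → ℝ) (b : Bool)
    (X : ℕ → Ω → ℝ) (A : ℕ → Ω → ℕ) (Z : ℕ → Ω → EuclideanSpace ℝ (Fin q))
    (t : ℝ) (κ : ℝ × EuclideanSpace ℝ (Fin q)) : ℝ :=
  ∫ ω', fF w b t κ (X 0 ω', A 0 ω', Z 0 ω') ∂P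

lemma fF_ev_left (w : EuclideanSpace ℝ (Fin q) → EuclideanSpace ℝ (Fin q) → ℝ)
    (y : ℝ × ℕ × EuclideanSpace ℝ (Fin q)) (t : ℝ) (κ : ℝ × EuclideanSpace ℝ (Fin q)) :
    (fun s => fF w false s κ y) =ᶠ[𝓝[<] t] (fun _ => fF w false t κ y) := by
  rcases le_or_gt t y.1 with h | h
  · filter_upwards [self_mem_nhdsWithin] with s hs
    have e1 : (s ≤ y.1) = (t ≤ y.1) := propext (iff_of_true (le_trans (le_of_lt hs) h) h)
    unfold fF; simp only [Bool.cond_false, e1]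
  · filter_upwards [Ioo_mem_nhdsLT_of_mem (show t ∈ Set.Ioc y.1 t from ⟨h, le_refl t⟩)] with s hs
    have e1 : (s ≤ y.1) = (t ≤ y.1) := propext (iff_of_false (not_le.2 hs.1) (not_le.2 h))
    unfold fF; simp only [Bool.cond_false, e1]

lemma fF_ev_right (w : EuclideanSpace ℝ (Fin q) → EuclideanSpace ℝ (Fin q) → ℝ)
    (y : ℝ × ℕ × EuclideanSpace ℝ (Fin q)) (t : ℝ) (κ : ℝ × EuclideanSpace ℝ (Fin q)) :
    (fun s => fF w false s κ y) =ᶠ[𝓝[>] t] (fun _ => fF w true t κ y) := by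
  rcases lt_or_ge t y.1 with h | h
  · filter_upwards [Ioc_mem_nhdsGT_of_mem (show t ∈ Set.Ico t y.1 from ⟨le_refl t, h⟩)] with s hs
    have e1 : (s ≤ y.1) = (t < y.1) := propext (iff_of_true hs.2 h)
    unfold fF; simp only [Bool.cond_false, Bool.cond_true, e1]
  · filter_upwards [self_mem_nhdsWithin] with s hs
    have e1 : (s ≤ y.1) = (t < y.1) :=
      propext (iff_of_false (not_le.2 (lt_of_le_of_lt h hs)) (not_lt.2 h))
    unfold fF; simp only [Bool.cond_false, Bool.cond_true, e1]


variable {P : Measure Ω} [IsProbabilityMeasure P]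
variable {X : ℕ → Ω → ℝ} {A : ℕ → Ω → ℕ} {Z : ℕ → Ω → EuclideanSpace ℝ (Fin q)}
variable {w : EuclideanSpace ℝ (Fin q) → EuclideanSpace ℝ (Fin q) → ℝ}
variable {c M L : ℝ} {B : Set (EuclideanSpace ℝ (Fin q))}
variable {K : Set (ℝ × EuclideanSpace ℝ (Fin q))}
variable {κ κ' : ℝ × EuclideanSpace ℝ (Fin q)} {b b' : Bool} {t t' : ℝ}

lemma memK_props (hK : K ⊆ Set.Icc (0:ℝ) 1 ×ˢ B) (hκ : κ ∈ K) :
    0 ≤ κ.1 ∧ κ.1 ≤ 1 ∧ κ.2 ∈ B := by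
  have h := Set.mem_prod.1 (hK hκ)
  exact ⟨h.1.1, h.1.2, h.2⟩

lemma fF_ae_bound (hZ0 : ∀ᵐ ω ∂P, ‖Z 0 ω‖ ≤ c)
    (hwb : ∀ β ∈ B, ∀ z : EuclideanSpace ℝ (Fin q), ‖z‖ ≤ c → w β z ∈ Set.Icc 0 M)
    (hK : K ⊆ Set.Icc (0:ℝ) 1 ×ˢ B) (hκ : κ ∈ K) (b : Bool) (t : ℝ) :
    ∀ᵐ ω ∂P, |fF w b t κ (X 0 ω, A 0 ω, Z 0 ω)| ≤ 2 * M := by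
  obtain ⟨hp0, hp1, hβ⟩ := memK_props hK hκ
  filter_upwards [hZ0] with ω hω
  have h := fF_mem (b := b) (t := t) (y := (X 0 ω, A 0 ω, Z 0 ω))
    (hwb _ hβ _ hω).1 (hwb _ hβ _ hω).2 hp0 hp1
  rw [abs_le]; exact ⟨by linarith [h.1, h.2], h.2⟩

lemma fF_int (hmeas0 : Measurable fun ω => (X 0 ω, A 0 ω, Z 0 ω))
    (hZ0 : ∀ᵐ ω ∂P, ‖Z 0 ω‖ ≤ c) (hw : ∀ β, Measurable (w β))
    (hwb : ∀ β ∈ B, ∀ z : EuclideanSpace ℝ (Fin q), ‖z‖ ≤ c → w β z ∈ Set.Icc 0 M)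
    (hK : K ⊆ Set.Icc (0:ℝ) 1 ×ˢ B) (hκ : κ ∈ K) (b : Bool) (t : ℝ) :
    Integrable (fun ω => fF w b t κ (X 0 ω, A 0 ω, Z 0 ω)) P :=
  Integrable.mono' (integrable_const (2*M))
    (((fF_meas w hw b t κ).comp hmeas0).aestronglyMeasurable)
    ((fF_ae_bound hZ0 hwb hK hκ b t).mono fun ω h => by rwa [Real.norm_eq_abs])

lemma gF_mono (hmeas0 : Measurable fun ω => (X 0 ω, A 0 ω, Z 0 ω))
    (hZ0 : ∀ᵐ ω ∂P, ‖Z 0 ω‖ ≤ c) (hw : ∀ β, Measurable (w β))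
    (hwb : ∀ β ∈ B, ∀ z : EuclideanSpace ℝ (Fin q), ‖z‖ ≤ c → w β z ∈ Set.Icc 0 M)
    (hK : K ⊆ Set.Icc (0:ℝ) 1 ×ˢ B) (hκ : κ ∈ K)
    (h : ∀ x : ℝ, CD b t x → CD b' t' x) :
    gF P w b X A Z t κ ≤ gF P w b' X A Z t' κ := by
  obtain ⟨hp0, hp1, hβ⟩ := memK_props hK hκ
  refine integral_mono_ae (fF_int hmeas0 hZ0 hw hwb hK hκ b t)
    (fF_int hmeas0 hZ0 hw hwb hK hκ b' t') ?_
  filter_upwards [hZ0] with ω hω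
  exact fF_mono (hwb _ hβ _ hω).1 hp0 h

lemma gF_nonneg (hZ0 : ∀ᵐ ω ∂P, ‖Z 0 ω‖ ≤ c)
    (hwb : ∀ β ∈ B, ∀ z : EuclideanSpace ℝ (Fin q), ‖z‖ ≤ c → w β z ∈ Set.Icc 0 M)
    (hK : K ⊆ Set.Icc (0:ℝ) 1 ×ˢ B) (hκ : κ ∈ K) (b : Bool) (t : ℝ) :
    0 ≤ gF P w b X A Z t κ := by
  obtain ⟨hp0, hp1, hβ⟩ := memK_props hK hκ
  refine integral_nonneg_of_ae ?_
  filter_upwards [hZ0] with ω hω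
  exact (fF_mem (hwb _ hβ _ hω).1 (hwb _ hβ _ hω).2 hp0 hp1).1

lemma gF_lc (hmeas0 : Measurable fun ω => (X 0 ω, A 0 ω, Z 0 ω))
    (hZ0 : ∀ᵐ ω ∂P, ‖Z 0 ω‖ ≤ c) (hw : ∀ β, Measurable (w β))
    (hwb : ∀ β ∈ B, ∀ z : EuclideanSpace ℝ (Fin q), ‖z‖ ≤ c → w β z ∈ Set.Icc 0 M)
    (hK : K ⊆ Set.Icc (0:ℝ) 1 ×ˢ B) (hκ : κ ∈ K) (t : ℝ) :
    Tendsto (fun s => gF P w false X A Z s κ) (𝓝[<] t) (𝓝 (gF P w false X A Z t κ)) := by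
  unfold gF
  refine tendsto_integral_filter_of_dominated_convergence (fun _ => 2*M)
    (Eventually.of_forall fun s => ((fF_meas w hw false s κ).comp hmeas0).aestronglyMeasurable)
    (Eventually.of_forall fun s => (fF_ae_bound hZ0 hwb hK hκ false s).mono
      fun ω h => by rwa [Real.norm_eq_abs]) (integrable_const _) ?_
  refine ae_of_all _ fun ω => ?_
  exact Tendsto.congr' (fF_ev_left w (X 0 ω, A 0 ω, Z 0 ω) t κ).symm tendsto_const_nhds

lemma gF_rc (hmeas0 : Measurable fun ω => (X 0 ω, A 0 ω, Z 0 ω))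
    (hZ0 : ∀ᵐ ω ∂P, ‖Z 0 ω‖ ≤ c) (hw : ∀ β, Measurable (w β))
    (hwb : ∀ β ∈ B, ∀ z : EuclideanSpace ℝ (Fin q), ‖z‖ ≤ c → w β z ∈ Set.Icc 0 M)
    (hK : K ⊆ Set.Icc (0:ℝ) 1 ×ˢ B) (hκ : κ ∈ K) (t : ℝ) :
    Tendsto (fun s => gF P w false X A Z s κ) (𝓝[>] t) (𝓝 (gF P w true X A Z t κ)) := by
  unfold gF
  refine tendsto_integral_filter_of_dominated_convergence (fun _ => 2*M)
    (Eventually.of_forall fun s => ((fF_meas w hw false s κ).comp hmeas0).aestronglyMeasurable)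
    (Eventually.of_forall fun s => (fF_ae_bound hZ0 hwb hK hκ false s).mono
      fun ω h => by rwa [Real.norm_eq_abs]) (integrable_const _) ?_
  refine ae_of_all _ fun ω => ?_
  exact Tendsto.congr' (fF_ev_right w (X 0 ω, A 0 ω, Z 0 ω) t κ).symm tendsto_const_nhds

lemma GnF_lc (n : ℕ) (ω : Ω) (t : ℝ) :
    Tendsto (fun s => GnF w false X A Z n s κ ω) (𝓝[<] t) (𝓝 (GnF w false X A Z n t κ ω)) := by
  refine Tendsto.congr' ?_ tendsto_const_nhds
  have h := (Finset.eventually_all (Finset.range n) (l := 𝓝[<] t)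
      (p := fun i s => fF w false s κ (X i ω, A i ω, Z i ω) = fF w false t κ (X i ω, A i ω, Z i ω))).2
      (fun i _ => fF_ev_left w _ t κ)
  filter_upwards [h] with s hs
  unfold GnF
  congr 1
  exact (Finset.sum_congr rfl fun i hi => hs i hi).symm

lemma GnF_mono {n : ℕ} {ω : Ω}
    (hwb : ∀ β ∈ B, ∀ z : EuclideanSpace ℝ (Fin q), ‖z‖ ≤ c → w β z ∈ Set.Icc 0 M)
    (hK : K ⊆ Set.Icc (0:ℝ) 1 ×ˢ B) (hκ : κ ∈ K)
    (hωZ : ∀ i, ‖Z i ω‖ ≤ c) (h : ∀ x : ℝ, CD b t x → CD b' t' x) :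
    GnF w b X A Z n t κ ω ≤ GnF w b' X A Z n t' κ ω := by
  obtain ⟨hp0, hp1, hβ⟩ := memK_props hK hκ
  unfold GnF
  refine mul_le_mul_of_nonneg_left (Finset.sum_le_sum fun i _ => ?_) (by positivity)
  exact fF_mono (hwb _ hβ _ (hωZ i)).1 hp0 h

lemma GnF_lip {n : ℕ} {ω : Ω} (hM0 : 0 ≤ M) (hL0 : 0 ≤ L)
    (hwb : ∀ β ∈ B, ∀ z : EuclideanSpace ℝ (Fin q), ‖z‖ ≤ c → w β z ∈ Set.Icc 0 M)
    (hwL : ∀ β ∈ B, ∀ β' ∈ B, ∀ z : EuclideanSpace ℝ (Fin q), ‖z‖ ≤ c →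
      |w β z - w β' z| ≤ L * ‖β - β'‖)
    (hK : K ⊆ Set.Icc (0:ℝ) 1 ×ˢ B) (hκ : κ ∈ K) (hκ' : κ' ∈ K)
    (hωZ : ∀ i, ‖Z i ω‖ ≤ c) (t : ℝ) :
    |GnF w false X A Z n t κ ω - GnF w false X A Z n t κ' ω|
      ≤ 2 * (L * ‖κ.2 - κ'.2‖) + M * |κ.1 - κ'.1| := by
  obtain ⟨hp0, hp1, hβ⟩ := memK_props hK hκ
  obtain ⟨hp0', hp1', hβ'⟩ := memK_props hK hκ'
  have hD0 : 0 ≤ 2 * (L * ‖κ.2 - κ'.2‖) + M * |κ.1 - κ'.1| := by positivity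
  unfold GnF
  rcases Nat.eq_zero_or_pos n with rfl | hn
  · simpa using hD0
  have hstep : ∀ i, |fF w false t κ (X i ω, A i ω, Z i ω) - fF w false t κ' (X i ω, A i ω, Z i ω)|
      ≤ 2 * (L * ‖κ.2 - κ'.2‖) + M * |κ.1 - κ'.1| := fun i =>
    fF_lip (hwb _ hβ' _ (hωZ i)).1 (hwb _ hβ' _ (hωZ i)).2 hp0 hp1
      (hwL _ hβ _ hβ' _ (hωZ i))
  rw [← mul_sub, ← Finset.sum_sub_distrib, abs_mul, abs_inv,
    abs_of_nonneg (Nat.cast_nonneg n)]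
  calc ((n:ℝ))⁻¹ * |∑ i ∈ Finset.range n, (fF w false t κ (X i ω, A i ω, Z i ω)
        - fF w false t κ' (X i ω, A i ω, Z i ω))|
      ≤ (n:ℝ)⁻¹ * ∑ i ∈ Finset.range n, |fF w false t κ (X i ω, A i ω, Z i ω)
        - fF w false t κ' (X i ω, A i ω, Z i ω)| := by
        refine mul_le_mul_of_nonneg_left (Finset.abs_sum_le_sum_abs _ _) (by positivity)
    _ ≤ (n:ℝ)⁻¹ * ∑ _i ∈ Finset.range n, (2 * (L * ‖κ.2 - κ'.2‖) + M * |κ.1 - κ'.1|) := by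
        refine mul_le_mul_of_nonneg_left (Finset.sum_le_sum fun i _ => hstep i) (by positivity)
    _ = 2 * (L * ‖κ.2 - κ'.2‖) + M * |κ.1 - κ'.1| := by
        rw [Finset.sum_const, Finset.card_range, nsmul_eq_mul]
        field_simp

lemma gF_lip (hmeas0 : Measurable fun ω => (X 0 ω, A 0 ω, Z 0 ω))
    (hZ0 : ∀ᵐ ω ∂P, ‖Z 0 ω‖ ≤ c) (hw : ∀ β, Measurable (w β))
    (hwb : ∀ β ∈ B, ∀ z : EuclideanSpace ℝ (Fin q), ‖z‖ ≤ c → w β z ∈ Set.Icc 0 M)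
    (hwL : ∀ β ∈ B, ∀ β' ∈ B, ∀ z : EuclideanSpace ℝ (Fin q), ‖z‖ ≤ c →
      |w β z - w β' z| ≤ L * ‖β - β'‖)
    (hK : K ⊆ Set.Icc (0:ℝ) 1 ×ˢ B) (hκ : κ ∈ K) (hκ' : κ' ∈ K) (t : ℝ) :
    |gF P w false X A Z t κ - gF P w false X A Z t κ'|
      ≤ 2 * (L * ‖κ.2 - κ'.2‖) + M * |κ.1 - κ'.1| := by
  obtain ⟨hp0, hp1, hβ⟩ := memK_props hK hκ
  obtain ⟨hp0', hp1', hβ'⟩ := memK_props hK hκ'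
  unfold gF
  rw [← integral_sub (fF_int hmeas0 hZ0 hw hwb hK hκ false t)
    (fF_int hmeas0 hZ0 hw hwb hK hκ' false t)]
  have h := norm_integral_le_of_norm_le_const (μ := P)
    (C := 2 * (L * ‖κ.2 - κ'.2‖) + M * |κ.1 - κ'.1|)
    (f := fun ω => fF w false t κ (X 0 ω, A 0 ω, Z 0 ω) - fF w false t κ' (X 0 ω, A 0 ω, Z 0 ω)) ?_
  · simpa [Real.norm_eq_abs] using h
  · filter_upwards [hZ0] with ω hω
    rw [Real.norm_eq_abs]
    exact fF_lip (hwb _ hβ' _ hω).1 (hwb _ hβ' _ hω).2 hp0 hp1 (hwL _ hβ _ hβ' _ hω)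

lemma GnF_slln
    (hmeas : ∀ i, Measurable fun ω => (X i ω, A i ω, Z i ω))
    (hindep : iIndepFun (fun i ω => (X i ω, A i ω, Z i ω)) P)
    (hident : ∀ i, IdentDistrib (fun ω => (X i ω, A i ω, Z i ω))
      (fun ω => (X 0 ω, A 0 ω, Z 0 ω)) P P)
    (hZ0 : ∀ᵐ ω ∂P, ‖Z 0 ω‖ ≤ c) (hw : ∀ β, Measurable (w β))
    (hwb : ∀ β ∈ B, ∀ z : EuclideanSpace ℝ (Fin q), ‖z‖ ≤ c → w β z ∈ Set.Icc 0 M)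
    (hK : K ⊆ Set.Icc (0:ℝ) 1 ×ˢ B) (hκ : κ ∈ K) (b : Bool) (t : ℝ) :
    ∀ᵐ ω ∂P, Tendsto (fun n => GnF w b X A Z n t κ ω) atTop (𝓝 (gF P w b X A Z t κ)) :=
  slln_comp P (fun i ω => (X i ω, A i ω, Z i ω)) hmeas hindep hident
    (fF w b t κ) (fF_meas w hw b t κ) (2*M) (fF_ae_bound hZ0 hwb hK hκ b t)

lemma GnF_measurable (hmeas : ∀ i, Measurable fun ω => (X i ω, A i ω, Z i ω))
    (hw : ∀ β, Measurable (w β)) (n : ℕ) (t : ℝ) :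
    Measurable (fun ω => GnF w b X A Z n t κ ω) := by
  unfold GnF
  exact (Finset.measurable_sum _ fun i _ => (fF_meas w hw b t κ).comp (hmeas i)).const_mul _

lemma key_lemma
    (hmeas : ∀ i, Measurable fun ω => (X i ω, A i ω, Z i ω))
    (hindep : iIndepFun (fun i ω => (X i ω, A i ω, Z i ω)) P)
    (hident : ∀ i, IdentDistrib (fun ω => (X i ω, A i ω, Z i ω))
      (fun ω => (X 0 ω, A 0 ω, Z 0 ω)) P P)
    (hZ : ∀ i, ∀ᵐ ω ∂P, ‖Z i ω‖ ≤ c)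
    (hw : ∀ β, Measurable (w β)) (hM0 : 0 ≤ M) (hL0 : 0 ≤ L)
    (hwb : ∀ β ∈ B, ∀ z : EuclideanSpace ℝ (Fin q), ‖z‖ ≤ c → w β z ∈ Set.Icc 0 M)
    (hwL : ∀ β ∈ B, ∀ β' ∈ B, ∀ z : EuclideanSpace ℝ (Fin q), ‖z‖ ≤ c →
      |w β z - w β' z| ≤ L * ‖β - β'‖)
    (hK : K ⊆ Set.Icc (0:ℝ) 1 ×ˢ B) (hKcomp : IsCompact K)
    {τ : ℝ} (hτ : 0 < τ) {δ' : ℝ} (hδ' : 0 < δ') :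
    ∀ᵐ ω ∂P, ∀ᶠ n in atTop, ∀ κ ∈ K, ∀ t ∈ Set.Icc 0 τ,
      |GnF w false X A Z n t κ ω - gF P w false X A Z t κ| < δ' := by
  have hmeas0 := hmeas 0
  have hZ0 := hZ 0
  have hη : 0 < δ'/8 := by linarith
  have hr : 0 < δ'/(8*(2*L+M+1)) := div_pos hδ' (by linarith)
  obtain ⟨s, hsK, hcov⟩ := hKcomp.elim_nhds_subcover (fun κ₀ => Metric.ball κ₀ (δ'/(8*(2*L+M+1))))
    (fun κ₀ _ => Metric.ball_mem_nhds κ₀ hr)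
  have hgrid : ∀ κ₀ ∈ s, ∃ T : Finset ℝ, (↑T ⊆ Set.Icc 0 τ) ∧ ∀ u ∈ Set.Icc 0 τ, u ∈ T ∨
      ∃ a ∈ T, ∃ b ∈ T, a < u ∧ u ≤ b ∧
        gF P w true X A Z a κ₀ - δ'/8 ≤ gF P w false X A Z b κ₀ := by
    intro κ₀ hκ₀
    have hκ₀K : κ₀ ∈ K := hsK κ₀ hκ₀
    refine grid_exists (H := fun u => gF P w false X A Z u κ₀)
      (Hs := fun u => gF P w true X A Z u κ₀) hτ hη ?_ ?_ ?_ ?_ ?_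
    · intro u v huv
      exact gF_mono hmeas0 hZ0 hw hwb hK hκ₀K (fun x hx => (le_trans huv hx : CD false u x))
    · intro u
      exact gF_mono hmeas0 hZ0 hw hwb hK hκ₀K (fun x hx => (le_of_lt hx : CD false u x))
    · intro u
      exact gF_nonneg hZ0 hwb hK hκ₀K true u
    · intro u
      exact gF_lc hmeas0 hZ0 hw hwb hK hκ₀K u
    · intro u
      exact gF_rc hmeas0 hZ0 hw hwb hK hκ₀K u
  choose! T hT1 hT2 using hgrid
  have haegrid : ∀ᵐ ω ∂P, ∀ κ₀ ∈ (↑s : Set (ℝ × EuclideanSpace ℝ (Fin q))),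
      ∀ t' ∈ (↑(T κ₀) : Set ℝ),
      Tendsto (fun n => GnF w false X A Z n t' κ₀ ω) atTop (𝓝 (gF P w false X A Z t' κ₀)) ∧
      Tendsto (fun n => GnF w true X A Z n t' κ₀ ω) atTop (𝓝 (gF P w true X A Z t' κ₀)) := by
    rw [ae_ball_iff s.countable_toSet]
    intro κ₀ hκ₀
    rw [ae_ball_iff (T κ₀).countable_toSet]
    intro t' _
    exact (GnF_slln hmeas hindep hident hZ0 hw hwb hK (hsK κ₀ hκ₀) false t').and
      (GnF_slln hmeas hindep hident hZ0 hw hwb hK (hsK κ₀ hκ₀) true t')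
  filter_upwards [haegrid, ae_all_iff.2 hZ] with ω hω hωZ
  have hev : ∀ᶠ n in atTop, ∀ κ₀ ∈ s, ∀ t' ∈ T κ₀,
      |GnF w false X A Z n t' κ₀ ω - gF P w false X A Z t' κ₀| < δ'/8 ∧
      |GnF w true X A Z n t' κ₀ ω - gF P w true X A Z t' κ₀| < δ'/8 := by
    rw [Finset.eventually_all]
    intro κ₀ hκ₀
    rw [Finset.eventually_all]
    intro t' ht'
    have h1 := (hω κ₀ hκ₀ t' ht').1
    have h2 := (hω κ₀ hκ₀ t' ht').2
    filter_upwards [(Metric.tendsto_nhds.mp h1) _ hη, (Metric.tendsto_nhds.mp h2) _ hη]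
      with n hn1 hn2
    rw [Real.dist_eq] at hn1 hn2
    exact ⟨hn1, hn2⟩
  filter_upwards [hev] with n hn
  intro κ hκ t ht
  obtain ⟨κ₀, hκ₀s, hκball⟩ : ∃ κ₀ ∈ s, κ ∈ Metric.ball κ₀ (δ'/(8*(2*L+M+1))) := by
    have h := hcov hκ
    simpa only [Set.mem_iUnion, exists_prop] using h
  have hκ₀K : κ₀ ∈ K := hsK κ₀ hκ₀s
  have hd : dist κ κ₀ < δ'/(8*(2*L+M+1)) := Metric.mem_ball.1 hκball
  have hdβ : ‖κ.2 - κ₀.2‖ ≤ dist κ κ₀ := by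
    rw [← dist_eq_norm]
    calc dist κ.2 κ₀.2 ≤ max (dist κ.1 κ₀.1) (dist κ.2 κ₀.2) := le_max_right _ _
    _ = dist κ κ₀ := (Prod.dist_eq).symm
  have hdp : |κ.1 - κ₀.1| ≤ dist κ κ₀ := by
    rw [← Real.dist_eq]
    calc dist κ.1 κ₀.1 ≤ max (dist κ.1 κ₀.1) (dist κ.2 κ₀.2) := le_max_left _ _
    _ = dist κ κ₀ := (Prod.dist_eq).symm
  have hCr : 2*(L*‖κ.2 - κ₀.2‖) + M*|κ.1 - κ₀.1| ≤ δ'/4 := by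
    have h1 : ‖κ.2 - κ₀.2‖ ≤ δ'/(8*(2*L+M+1)) := le_of_lt (lt_of_le_of_lt hdβ hd)
    have h2 : |κ.1 - κ₀.1| ≤ δ'/(8*(2*L+M+1)) := le_of_lt (lt_of_le_of_lt hdp hd)
    have h3 : 0 < 2*L+M+1 := by linarith
    have e1 : 2*(L*‖κ.2 - κ₀.2‖) ≤ 2*L*(δ'/(8*(2*L+M+1))) := by
      nlinarith [norm_nonneg (κ.2 - κ₀.2)]
    have e2 : M*|κ.1 - κ₀.1| ≤ M*(δ'/(8*(2*L+M+1))) := by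
      nlinarith [abs_nonneg (κ.1 - κ₀.1)]
    have e3 : (2*L+M)*(δ'/(8*(2*L+M+1))) ≤ δ'/4 := by
      rw [show (2*L+M)*(δ'/(8*(2*L+M+1))) = ((2*L+M)*δ')/(8*(2*L+M+1)) by ring]
      rw [div_le_div_iff₀ (by linarith) (by norm_num : (0:ℝ) < 4)]
      nlinarith
    nlinarith
  have hlip1 : |GnF w false X A Z n t κ ω - GnF w false X A Z n t κ₀ ω|
      ≤ 2 * (L * ‖κ.2 - κ₀.2‖) + M * |κ.1 - κ₀.1| :=
    GnF_lip hM0 hL0 hwb hwL hK hκ hκ₀K hωZ t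
  have hlip2 := gF_lip hmeas0 hZ0 hw hwb hwL hK hκ hκ₀K t
  have hmid : |GnF w false X A Z n t κ₀ ω - gF P w false X A Z t κ₀| ≤ 2*(δ'/8) := by
    rcases hT2 κ₀ hκ₀s t ht with htT | ⟨a, haT, b, hbT, hau, hub, hbr⟩
    · have := (hn κ₀ hκ₀s t htT).1
      linarith
    · have h1 : GnF w false X A Z n t κ₀ ω ≤ GnF w true X A Z n a κ₀ ω :=
        GnF_mono hwb hK hκ₀K hωZ (fun x hx => (lt_of_lt_of_le hau hx : CD true a x))
      have h2 : GnF w false X A Z n b κ₀ ω ≤ GnF w false X A Z n t κ₀ ω :=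
        GnF_mono hwb hK hκ₀K hωZ (fun x hx => (le_trans hub hx : CD false t x))
      have h3 := abs_lt.1 (hn κ₀ hκ₀s a haT).2
      have h4 := abs_lt.1 (hn κ₀ hκ₀s b hbT).1
      have h5 : gF P w false X A Z b κ₀ ≤ gF P w false X A Z t κ₀ :=
        gF_mono hmeas0 hZ0 hw hwb hK hκ₀K (fun x hx => (le_trans hub hx : CD false t x))
      have h6 : gF P w false X A Z t κ₀ ≤ gF P w true X A Z a κ₀ :=
        gF_mono hmeas0 hZ0 hw hwb hK hκ₀K (fun x hx => (lt_of_lt_of_le hau hx : CD true a x))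
      rw [abs_le]
      constructor <;> linarith
  have hlip2' : |gF P w false X A Z t κ₀ - gF P w false X A Z t κ| ≤
      2*(L*‖κ.2 - κ₀.2‖) + M*|κ.1 - κ₀.1| := by rwa [abs_sub_comm] at hlip2
  have htri1 := abs_sub_le (GnF w false X A Z n t κ ω) (GnF w false X A Z n t κ₀ ω)
    (gF P w false X A Z t κ)
  have htri2 := abs_sub_le (GnF w false X A Z n t κ₀ ω) (gF P w false X A Z t κ₀)
    (gF P w false X A Z t κ)
  linarith

lemma master
    (hmeas : ∀ i, Measurable fun ω => (X i ω, A i ω, Z i ω))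
    (hindep : iIndepFun (fun i ω => (X i ω, A i ω, Z i ω)) P)
    (hident : ∀ i, IdentDistrib (fun ω => (X i ω, A i ω, Z i ω))
      (fun ω => (X 0 ω, A 0 ω, Z 0 ω)) P P)
    (hZ : ∀ i, ∀ᵐ ω ∂P, ‖Z i ω‖ ≤ c)
    (hB : IsCompact B)
    {ε τ : ℝ} (hε : 0 < ε) (hε' : ε < 1/2) (hτ : 0 < τ)
    (hw : ∀ β, Measurable (w β)) (hM0 : 0 ≤ M) (hL0 : 0 ≤ L)
    (hwb : ∀ β ∈ B, ∀ z : EuclideanSpace ℝ (Fin q), ‖z‖ ≤ c → w β z ∈ Set.Icc 0 M)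
    (hwL : ∀ β ∈ B, ∀ β' ∈ B, ∀ z : EuclideanSpace ℝ (Fin q), ‖z‖ ≤ c →
      |w β z - w β' z| ≤ L * ‖β - β'‖)
    {δ : ℝ} (hδ : 0 < δ) :
    Tendsto (fun n => P {ω | ∃ p ∈ Set.Icc ε (1-ε), ∃ β ∈ B, ∃ t ∈ Set.Icc 0 τ,
      δ ≤ |GnF w false X A Z n t (p, β) ω - gF P w false X A Z t (p, β)|}) atTop (𝓝 0) := by
  have hmeas0 := hmeas 0
  have hZ0 := hZ 0
  set K : Set (ℝ × EuclideanSpace ℝ (Fin q)) := Set.Icc ε (1-ε) ×ˢ B with hKdef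
  have hKsub : K ⊆ Set.Icc (0:ℝ) 1 ×ˢ B :=
    Set.prod_mono (Set.Icc_subset_Icc (by linarith) (by linarith)) subset_rfl
  have hKcomp : IsCompact K := isCompact_Icc.prod hB
  obtain ⟨Dκ, hDκsub, hDκcnt, hDκdense⟩ := EMetric.subset_countable_closure_of_compact hKcomp
  set Dt : Set ℝ := (Set.range ((↑) : ℚ → ℝ) ∪ {0, τ}) ∩ Set.Icc 0 τ with hDtdef
  have hDtcnt : Dt.Countable :=
    Set.Countable.mono Set.inter_subset_left
      ((Set.countable_range _).union ((Set.countable_singleton τ).insert 0))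
  have hDtsub : Dt ⊆ Set.Icc 0 τ := Set.inter_subset_right
  set Mn : ℕ → Set Ω := fun n => ⋃ κ ∈ Dκ, ⋃ t' ∈ Dt,
    {ω | δ/4 ≤ |GnF w false X A Z n t' κ ω - gF P w false X A Z t' κ|} with hMndef
  have hMnmeas : ∀ n, MeasurableSet (Mn n) := fun n =>
    MeasurableSet.biUnion hDκcnt fun κ _ => MeasurableSet.biUnion hDtcnt fun t' _ =>
      measurableSet_le measurable_const
        (((GnF_measurable hmeas hw n t').sub measurable_const).abs)
  have hG : P {ω | ¬ ∀ i, ‖Z i ω‖ ≤ c} = 0 := by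
    have h := ae_all_iff.2 hZ
    rwa [ae_iff] at h
  have hsub : ∀ n, {ω | ∃ p ∈ Set.Icc ε (1-ε), ∃ β ∈ B, ∃ t ∈ Set.Icc 0 τ,
      δ ≤ |GnF w false X A Z n t (p, β) ω - gF P w false X A Z t (p, β)|}
      ⊆ Mn n ∪ {ω | ¬ ∀ i, ‖Z i ω‖ ≤ c} := by
    intro n ω hωmem
    by_cases hωG : ∀ i, ‖Z i ω‖ ≤ c
    case neg => exact Or.inr hωG
    left
    obtain ⟨p, hp, β, hβ, t, ht, hdev⟩ := hωmem
    have hκK : (p, β) ∈ K := Set.mem_prod.2 ⟨hp, hβ⟩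
    have hrpos : 0 < δ/(8*(2*L+M+1)) := div_pos hδ (by linarith)
    obtain ⟨κ', hκ'D, hκ'close⟩ : ∃ κ' ∈ Dκ, dist (p,β) κ' < δ/(8*(2*L+M+1)) :=
      Metric.mem_closure_iff.1 (hDκdense hκK) _ hrpos
    have hκ'K : κ' ∈ K := hDκsub hκ'D
    have hlip1 : |GnF w false X A Z n t (p,β) ω - GnF w false X A Z n t κ' ω|
        ≤ 2 * (L * ‖(p,β).2 - κ'.2‖) + M * |(p,β).1 - κ'.1| :=
      GnF_lip hM0 hL0 hwb hwL hKsub hκK hκ'K hωG t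
    have hlip2 := gF_lip hmeas0 hZ0 hw hwb hwL hKsub hκK hκ'K t
    have hdβ : ‖(p,β).2 - κ'.2‖ ≤ dist (p,β) κ' := by
      rw [← dist_eq_norm]
      calc dist (p,β).2 κ'.2 ≤ max (dist (p,β).1 κ'.1) (dist (p,β).2 κ'.2) := le_max_right _ _
      _ = dist (p,β) κ' := (Prod.dist_eq).symm
    have hdp : |(p,β).1 - κ'.1| ≤ dist (p,β) κ' := by
      rw [← Real.dist_eq]
      calc dist (p,β).1 κ'.1 ≤ max (dist (p,β).1 κ'.1) (dist (p,β).2 κ'.2) := le_max_left _ _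
      _ = dist (p,β) κ' := (Prod.dist_eq).symm
    have hquarter : 2 * (L * ‖(p,β).2 - κ'.2‖) + M * |(p,β).1 - κ'.1| ≤ δ/4 := by
      have h1 : ‖(p,β).2 - κ'.2‖ ≤ δ/(8*(2*L+M+1)) := le_of_lt (lt_of_le_of_lt hdβ hκ'close)
      have h2 : |(p,β).1 - κ'.1| ≤ δ/(8*(2*L+M+1)) := le_of_lt (lt_of_le_of_lt hdp hκ'close)
      have h3 : 0 < 2*L+M+1 := by linarith
      have e1 : 2*(L*‖(p,β).2 - κ'.2‖) ≤ 2*L*(δ/(8*(2*L+M+1))) := by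
        nlinarith [norm_nonneg ((p,β).2 - κ'.2)]
      have e2 : M*|(p,β).1 - κ'.1| ≤ M*(δ/(8*(2*L+M+1))) := by
        nlinarith [abs_nonneg ((p,β).1 - κ'.1)]
      have e3 : (2*L+M)*(δ/(8*(2*L+M+1))) ≤ δ/4 := by
        rw [show (2*L+M)*(δ/(8*(2*L+M+1))) = ((2*L+M)*δ)/(8*(2*L+M+1)) by ring]
        rw [div_le_div_iff₀ (by linarith) (by norm_num : (0:ℝ) < 4)]
        nlinarith
      nlinarith
    have hdev' : δ/2 ≤ |GnF w false X A Z n t κ' ω - gF P w false X A Z t κ'| := by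
      have hre : (GnF w false X A Z n t (p,β) ω - gF P w false X A Z t (p,β))
          - (GnF w false X A Z n t κ' ω - gF P w false X A Z t κ')
          = (GnF w false X A Z n t (p,β) ω - GnF w false X A Z n t κ' ω)
            - (gF P w false X A Z t (p,β) - gF P w false X A Z t κ') := by ring
      have habs : |(GnF w false X A Z n t (p,β) ω - gF P w false X A Z t (p,β))
          - (GnF w false X A Z n t κ' ω - gF P w false X A Z t κ')| ≤ δ/2 := by
        rw [hre]
        calc |(GnF w false X A Z n t (p,β) ω - GnF w false X A Z n t κ' ω)
            - (gF P w false X A Z t (p,β) - gF P w false X A Z t κ')|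
            ≤ |GnF w false X A Z n t (p,β) ω - GnF w false X A Z n t κ' ω|
              + |gF P w false X A Z t (p,β) - gF P w false X A Z t κ'| := abs_sub _ _
        _ ≤ δ/4 + δ/4 := add_le_add (le_trans hlip1 hquarter) (le_trans hlip2 hquarter)
        _ = δ/2 := by ring
      have h := abs_sub_abs_le_abs_sub
        (GnF w false X A Z n t (p,β) ω - gF P w false X A Z t (p,β))
        (GnF w false X A Z n t κ' ω - gF P w false X A Z t κ')
      linarith
    by_cases htD : t ∈ Dt
    · simp only [hMndef, Set.mem_iUnion, exists_prop, Set.mem_setOf_eq]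
      exact ⟨κ', hκ'D, t, htD, by linarith⟩
    · have ht0 : 0 < t := by
        rcases eq_or_lt_of_le ht.1 with h | h
        · exact absurd (show t ∈ Dt from ⟨Or.inr (Or.inl h.symm), ht⟩) htD
        · exact h
      have hlim : Tendsto (fun u => |GnF w false X A Z n u κ' ω - gF P w false X A Z u κ'|)
          (𝓝[<] t) (𝓝 (|GnF w false X A Z n t κ' ω - gF P w false X A Z t κ'|)) :=
        ((GnF_lc n ω t).sub (gF_lc hmeas0 hZ0 hw hwb hKsub hκ'K t)).abs
      have hev : ∀ᶠ u in 𝓝[<] t,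
          δ/4 < |GnF w false X A Z n u κ' ω - gF P w false X A Z u κ'| :=
        hlim.eventually (lt_mem_nhds (by linarith))
      obtain ⟨u₀, hu₀, hIoo⟩ := mem_nhdsLT_iff_exists_Ioo_subset.1 hev
      have hmax : max u₀ 0 < t := max_lt hu₀ ht0
      obtain ⟨qr, hq1, hq2⟩ := exists_rat_btwn hmax
      have hqIoo : (qr:ℝ) ∈ Set.Ioo u₀ t := ⟨lt_of_le_of_lt (le_max_left _ _) hq1, hq2⟩
      have hqDt : (qr:ℝ) ∈ Dt := ⟨Or.inl ⟨qr, rfl⟩,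
        ⟨le_of_lt (lt_of_le_of_lt (le_max_right _ _) hq1), le_trans (le_of_lt hq2) ht.2⟩⟩
      have hq := hIoo hqIoo
      simp only [hMndef, Set.mem_iUnion, exists_prop, Set.mem_setOf_eq]
      exact ⟨κ', hκ'D, qr, hqDt, le_of_lt hq⟩
  have hkey := key_lemma hmeas hindep hident hZ hw hM0 hL0 hwb hwL hKsub hKcomp hτ
    (show (0:ℝ) < δ/4 by linarith)
  have haeind : ∀ᵐ ω ∂P, Tendsto (fun n => (Mn n).indicator (fun _ => (1:ENNReal)) ω)
      atTop (𝓝 0) := by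
    filter_upwards [hkey] with ω hω
    refine Tendsto.congr' ?_ tendsto_const_nhds
    filter_upwards [hω] with n hn
    rw [eq_comm, Set.indicator_apply_eq_zero]
    intro hmem
    exfalso
    simp only [hMndef, Set.mem_iUnion, exists_prop, Set.mem_setOf_eq] at hmem
    obtain ⟨κ, hκD, t', ht'D, hge⟩ := hmem
    have := hn κ (hDκsub hκD) t' (hDtsub ht'D)
    linarith
  have hlin : Tendsto (fun n => P (Mn n)) atTop (𝓝 0) := by
    have h := tendsto_lintegral_of_dominated_convergence (μ := P)
      (F := fun n => (Mn n).indicator (fun _ => (1:ENNReal))) (f := fun _ => 0)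
      (bound := fun _ => 1)
      (fun n => measurable_const.indicator (hMnmeas n))
      (fun n => ae_of_all _ fun ω => by
        classical
        by_cases hmem : ω ∈ Mn n <;> simp [Set.indicator_apply, hmem])
      (by simp [lintegral_one])
      haeind
    simp only [lintegral_zero] at h
    have heq : ∀ n, ∫⁻ ω, (Mn n).indicator (fun _ => (1:ENNReal)) ω ∂P = P (Mn n) := by
      intro n
      rw [lintegral_indicator (hMnmeas n)]
      simp
    simpa [heq] using h
  refine tendsto_of_tendsto_of_tendsto_of_le_of_le tendsto_const_nhds hlin
    (fun n => zero_le) (fun n => ?_)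
  calc P {ω | ∃ p ∈ Set.Icc ε (1-ε), ∃ β ∈ B, ∃ t ∈ Set.Icc 0 τ,
      δ ≤ |GnF w false X A Z n t (p, β) ω - gF P w false X A Z t (p, β)|}
      ≤ P (Mn n ∪ {ω | ¬ ∀ i, ‖Z i ω‖ ≤ c}) := measure_mono (hsub n)
    _ ≤ P (Mn n) + P {ω | ¬ ∀ i, ‖Z i ω‖ ≤ c} := measure_union_le _ _
    _ = P (Mn n) := by rw [hG, add_zero]


lemma mul_split (Ee Ii zz : ℝ) :
    (Ee * Ii) * zz = (Ee * max zz 0) * Ii - (Ee * max (-zz) 0) * Ii := by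
  rw [show (Ee * max zz 0) * Ii - (Ee * max (-zz) 0) * Ii
    = (Ee*Ii)*(max zz 0 - max (-zz) 0) from by ring, max_zero_sub_max_neg_zero_eq_self]

lemma sum_coord {q : ℕ} (n : ℕ) (v : ℕ → EuclideanSpace ℝ (Fin q)) (j : Fin q) :
    (∑ i ∈ Finset.range n, v i) j = ∑ i ∈ Finset.range n, v i j := by
  induction n with
  | zero => simp
  | succ m ih => rw [Finset.sum_range_succ, Finset.sum_range_succ, ← ih]; rfl

lemma integral_coord {q : ℕ} {Ω : Type*} [MeasurableSpace Ω] (P : Measure Ω)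
    (f : Ω → EuclideanSpace ℝ (Fin q)) (hf : Integrable f P) (j : Fin q) :
    (∫ ω, f ω ∂P) j = ∫ ω, f ω j ∂P := by
  have h := (PiLp.proj (𝕜 := ℝ) (β := fun _ : Fin q => ℝ) 2 j).integral_comp_comm hf
  exact h.symm

end EnLLNAux

/-- Uniform (in `p ∈ [ε,1−ε]`, `β ∈ B`, `t ∈ [0,τ]`) law of large numbers,
in probability, for `E_n^{(l)}`, `l = 0,1`. -/
theorem En_uniform_lln
    {Ω : Type*} [MeasurableSpace Ω] (P : Measure Ω) [IsProbabilityMeasure P] {q : ℕ}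
    (X : ℕ → Ω → ℝ) (A : ℕ → Ω → ℕ) (Z : ℕ → Ω → EuclideanSpace ℝ (Fin q))
    (hmeas : ∀ i, Measurable (fun ω => (X i ω, A i ω, Z i ω)))
    (hindep : iIndepFun (fun i ω => (X i ω, A i ω, Z i ω)) P)
    (hident : ∀ i, IdentDistrib (fun ω => (X i ω, A i ω, Z i ω))
      (fun ω => (X 0 ω, A 0 ω, Z 0 ω)) P P)
    (c : ℝ) (hZ : ∀ i, ∀ᵐ ω ∂P, ‖Z i ω‖ ≤ c)
    (B : Set (EuclideanSpace ℝ (Fin q))) (hB : IsCompact B)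
    (ε : ℝ) (hε : 0 < ε) (hε' : ε < 1/2) (τ : ℝ) (hτ : 0 < τ) :
    (∀ δ : ℝ, 0 < δ →
      Tendsto (fun n => P {ω | ∃ p ∈ Set.Icc ε (1 - ε), ∃ β ∈ B, ∃ t ∈ Set.Icc 0 τ,
          δ ≤ |En0 X A Z n t p β ω - e0pop P (X 0) (A 0) (Z 0) t p β|})
        atTop (nhds 0)) ∧
    (∀ δ : ℝ, 0 < δ →
      Tendsto (fun n => P {ω | ∃ p ∈ Set.Icc ε (1 - ε), ∃ β ∈ B, ∃ t ∈ Set.Icc 0 τ,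
          δ ≤ ‖En1 X A Z n t p β ω - e1pop P (X 0) (A 0) (Z 0) t p β‖})
        atTop (nhds 0)) := by
  classical
  obtain ⟨R, hR0, hR⟩ := hB.isBounded.exists_pos_norm_le
  set c' : ℝ := max c 0 with hc'def
  have hc'0 : 0 ≤ c' := le_max_right c 0
  set M₀ : ℝ := Real.exp (R * c') with hM₀def
  have hM₀pos : 0 < M₀ := Real.exp_pos _
  have hinnb : ∀ β ∈ B, ∀ z : EuclideanSpace ℝ (Fin q), ‖z‖ ≤ c → (inner ℝ β z : ℝ) ≤ R * c' := by
    intro β hβ z hz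
    calc (inner ℝ β z : ℝ) ≤ ‖β‖ * ‖z‖ := real_inner_le_norm β z
    _ ≤ R * c' := mul_le_mul (hR β hβ) (le_trans hz (le_max_left c 0)) (norm_nonneg z) hR0.le
  have hexpb : ∀ β ∈ B, ∀ z : EuclideanSpace ℝ (Fin q), ‖z‖ ≤ c →
      Real.exp ((inner ℝ β z : ℝ)) ≤ M₀ := fun β hβ z hz =>
    Real.exp_le_exp.2 (hinnb β hβ z hz)
  have hexplip : ∀ β ∈ B, ∀ β' ∈ B, ∀ z : EuclideanSpace ℝ (Fin q), ‖z‖ ≤ c →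
      |Real.exp ((inner ℝ β z : ℝ)) - Real.exp ((inner ℝ β' z : ℝ))| ≤ (M₀ * c') * ‖β - β'‖ := by
    intro β hβ β' hβ' z hz
    have hzc' : ‖z‖ ≤ c' := le_trans hz (le_max_left c 0)
    calc |Real.exp ((inner ℝ β z : ℝ)) - Real.exp ((inner ℝ β' z : ℝ))|
        ≤ M₀ * |(inner ℝ β z : ℝ) - (inner ℝ β' z : ℝ)| :=
          EnLLNAux.exp_lip (hinnb β hβ z hz) (hinnb β' hβ' z hz)
      _ = M₀ * |(inner ℝ (β - β') z : ℝ)| := by rw [inner_sub_left]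
      _ ≤ M₀ * (‖β - β'‖ * ‖z‖) :=
          mul_le_mul_of_nonneg_left (abs_real_inner_le_norm _ _) hM₀pos.le
      _ ≤ (M₀ * c') * ‖β - β'‖ := by
          rw [show (M₀ * c') * ‖β - β'‖ = (M₀ * ‖β - β'‖) * c' by ring,
            show M₀ * (‖β - β'‖ * ‖z‖) = (M₀ * ‖β - β'‖) * ‖z‖ by ring]
          exact mul_le_mul_of_nonneg_left hzc' (by positivity)
  constructor
  · -- scalar case l = 0
    intro δ hδ
    have h := EnLLNAux.master (P := P) (X := X) (A := A) (Z := Z)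
      (w := fun β z => Real.exp ((inner ℝ β z : ℝ))) (c := c) (M := M₀) (L := M₀ * c') (B := B)
      hmeas hindep hident hZ hB hε hε' hτ
      (fun β => (Real.continuous_exp.comp
        (Continuous.inner continuous_const continuous_id)).measurable)
      hM₀pos.le (by positivity)
      (fun β hβ z hz => ⟨(Real.exp_pos _).le, hexpb β hβ z hz⟩)
      (fun β hβ β' hβ' z hz => hexplip β hβ β' hβ' z hz) hδ
    exact h
  · -- vector case l = 1
    intro δ hδ
    rcases Nat.eq_zero_or_pos q with hq0 | hqpos
    · subst hq0
      have hempty : ∀ n : ℕ, {ω | ∃ p ∈ Set.Icc ε (1 - ε), ∃ β ∈ B, ∃ t ∈ Set.Icc 0 τ,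
          δ ≤ ‖En1 X A Z n t p β ω - e1pop P (X 0) (A 0) (Z 0) t p β‖} = ∅ := by
        intro n
        apply Set.eq_empty_of_forall_notMem
        rintro ω ⟨p, hp, β, hβ, t, ht, hge⟩
        have h0 : ‖En1 X A Z n t p β ω - e1pop P (X 0) (A 0) (Z 0) t p β‖ = 0 := by
          simp [EuclideanSpace.norm_eq]
        linarith
      have hfun : (fun n => P {ω | ∃ p ∈ Set.Icc ε (1 - ε), ∃ β ∈ B, ∃ t ∈ Set.Icc 0 τ,
          δ ≤ ‖En1 X A Z n t p β ω - e1pop P (X 0) (A 0) (Z 0) t p β‖})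
          = fun _ => (0 : ENNReal) := funext fun n => by rw [hempty n, measure_empty]
      rw [hfun]
      exact tendsto_const_nhds
    · -- weights per coordinate and sign
      set w2 : Fin q × Bool → EuclideanSpace ℝ (Fin q) → EuclideanSpace ℝ (Fin q) → ℝ :=
        fun js β z => Real.exp ((inner ℝ β z : ℝ)) * max (bif js.2 then z js.1 else -(z js.1)) 0
        with hw2def
      have hw2meas : ∀ js : Fin q × Bool, ∀ β, Measurable (w2 js β) := by
        intro js β
        apply Measurable.mul
        · exact (Real.continuous_exp.comp
            (Continuous.inner continuous_const continuous_id)).measurable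
        · apply Measurable.max _ measurable_const
          cases js.2
          · simp only [Bool.cond_false]
            exact ((PiLp.proj (𝕜 := ℝ) (β := fun _ : Fin q => ℝ) 2 js.1).continuous.neg).measurable
          · simp only [Bool.cond_true]
            exact ((PiLp.proj (𝕜 := ℝ) (β := fun _ : Fin q => ℝ) 2 js.1).continuous).measurable
      have hmaxb : ∀ js : Fin q × Bool, ∀ z : EuclideanSpace ℝ (Fin q), ‖z‖ ≤ c →
          max (bif js.2 then z js.1 else -(z js.1)) 0 ≤ c' := by
        intro js z hz
        have h1 : |z js.1| ≤ c' := le_trans (EnLLNAux.coord_abs_le_norm z js.1)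
          (le_trans hz (le_max_left c 0))
        cases js.2 <;> simp only [Bool.cond_false, Bool.cond_true] <;>
          exact max_le (by cases abs_le.1 h1; linarith) hc'0
      have hw2b : ∀ js : Fin q × Bool, ∀ β ∈ B, ∀ z : EuclideanSpace ℝ (Fin q), ‖z‖ ≤ c →
          w2 js β z ∈ Set.Icc 0 (M₀ * c') := by
        intro js β hβ z hz
        constructor
        · exact mul_nonneg (Real.exp_pos _).le (le_max_right _ _)
        · exact mul_le_mul (hexpb β hβ z hz) (hmaxb js z hz) (le_max_right _ _) hM₀pos.le
      have hw2L : ∀ js : Fin q × Bool, ∀ β ∈ B, ∀ β' ∈ B,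
          ∀ z : EuclideanSpace ℝ (Fin q), ‖z‖ ≤ c →
          |w2 js β z - w2 js β' z| ≤ (M₀ * c' * c') * ‖β - β'‖ := by
        intro js β hβ β' hβ' z hz
        have hm0 : 0 ≤ max (bif js.2 then z js.1 else -(z js.1)) 0 := le_max_right _ _
        calc |w2 js β z - w2 js β' z|
            = |Real.exp ((inner ℝ β z : ℝ)) - Real.exp ((inner ℝ β' z : ℝ))|
              * max (bif js.2 then z js.1 else -(z js.1)) 0 := by
              rw [hw2def]
              simp only []
              rw [show Real.exp ((inner ℝ β z : ℝ)) * max (bif js.2 then z js.1 else -(z js.1)) 0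
                - Real.exp ((inner ℝ β' z : ℝ)) * max (bif js.2 then z js.1 else -(z js.1)) 0
                = (Real.exp ((inner ℝ β z : ℝ)) - Real.exp ((inner ℝ β' z : ℝ)))
                  * max (bif js.2 then z js.1 else -(z js.1)) 0 from by ring]
              rw [abs_mul, abs_of_nonneg hm0]
          _ ≤ ((M₀ * c') * ‖β - β'‖) * c' := by
              refine mul_le_mul (hexplip β hβ β' hβ' z hz) (hmaxb js z hz) hm0 ?_
              positivity
          _ = (M₀ * c' * c') * ‖β - β'‖ := by ring
      have hmaster : ∀ js : Fin q × Bool,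
          Tendsto (fun n => P {ω | ∃ p ∈ Set.Icc ε (1-ε), ∃ β ∈ B, ∃ t ∈ Set.Icc 0 τ,
            δ/(2*q) ≤ |EnLLNAux.GnF (w2 js) false X A Z n t (p, β) ω
              - EnLLNAux.gF P (w2 js) false X A Z t (p, β)|}) atTop (𝓝 0) := by
        intro js
        refine EnLLNAux.master (P := P) (X := X) (A := A) (Z := Z)
          (w := w2 js) (c := c) (M := M₀ * c') (L := M₀ * c' * c') (B := B)
          hmeas hindep hident hZ hB hε hε' hτ (hw2meas js) (by positivity) (by positivity)
          (hw2b js) (hw2L js) ?_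
        have hq' : (0:ℝ) < 2*q := by positivity
        positivity
      -- the exceptional-set inclusion
      set K : Set (ℝ × EuclideanSpace ℝ (Fin q)) := Set.Icc ε (1-ε) ×ˢ B with hKdef
      have hKsub : K ⊆ Set.Icc (0:ℝ) 1 ×ˢ B :=
        Set.prod_mono (Set.Icc_subset_Icc (by linarith) (by linarith)) subset_rfl
      have hmeas0 := hmeas 0
      have hZ0 := hZ 0
      have hne : Nonempty (Fin q × Bool) := ⟨(⟨0, hqpos⟩, true)⟩
      have hsub : ∀ n, {ω | ∃ p ∈ Set.Icc ε (1 - ε), ∃ β ∈ B, ∃ t ∈ Set.Icc 0 τ,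
          δ ≤ ‖En1 X A Z n t p β ω - e1pop P (X 0) (A 0) (Z 0) t p β‖}
          ⊆ ⋃ js ∈ (Finset.univ : Finset (Fin q × Bool)),
            {ω | ∃ p ∈ Set.Icc ε (1-ε), ∃ β ∈ B, ∃ t ∈ Set.Icc 0 τ,
              δ/(2*q) ≤ |EnLLNAux.GnF (w2 js) false X A Z n t (p, β) ω
                - EnLLNAux.gF P (w2 js) false X A Z t (p, β)|} := by
        intro n ω hω
        obtain ⟨p, hp, β, hβ, t, ht, hdev⟩ := hω
        have hκK : (p, β) ∈ K := Set.mem_prod.2 ⟨hp, hβ⟩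
        -- scalar weight for the common factor
        set scal : Ω → ℝ := fun ω' => Real.exp ((inner ℝ β (Z 0 ω') : ℝ)) *
          ((if t ≤ X 0 ω' ∧ A 0 ω' = 0 then 1 else 0)
            + p * (if t ≤ X 0 ω' ∧ A 0 ω' = 1 then 1 else 0)) with hscaldef
        have hp01 : 0 ≤ p ∧ p ≤ 1 := ⟨by linarith [hp.1], by linarith [hp.2]⟩
        -- integrability of the vector integrand
        have hscal_meas : Measurable scal := by
          have := (EnLLNAux.fF_meas (q := q) (fun β z => Real.exp ((inner ℝ β z : ℝ)))
            (fun β => (Real.continuous_exp.comp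
              (Continuous.inner continuous_const continuous_id)).measurable)
            false t (p, β)).comp hmeas0
          exact this
        have hZmeas : Measurable (fun ω' => Z 0 ω') :=
          (measurable_snd.comp measurable_snd).comp hmeas0
        have hintvec : Integrable (fun ω' => scal ω' • Z 0 ω') P := by
          refine Integrable.mono' (integrable_const ((2*M₀) * c'))
            (hscal_meas.smul hZmeas).aestronglyMeasurable ?_
          filter_upwards [hZ0] with ω' hω'
          rw [norm_smul]
          have hsb : scal ω' ∈ Set.Icc 0 (2*M₀) :=
            EnLLNAux.fF_mem (w := fun β z => Real.exp ((inner ℝ β z : ℝ))) (b := false)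
              (t := t) (κ := (p, β)) (y := (X 0 ω', A 0 ω', Z 0 ω'))
              (Real.exp_pos _).le (hexpb β hβ _ hω') hp01.1 hp01.2
          have h1 : ‖scal ω'‖ ≤ 2*M₀ := by
            rw [Real.norm_eq_abs, abs_of_nonneg hsb.1]; exact hsb.2
          have h2 : ‖Z 0 ω'‖ ≤ c' := le_trans hω' (le_max_left c 0)
          exact mul_le_mul h1 h2 (norm_nonneg _) (by positivity)
        -- the coordinate decomposition
        have hVj : ∀ j : Fin q,
            (En1 X A Z n t p β ω - e1pop P (X 0) (A 0) (Z 0) t p β) j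
            = (EnLLNAux.GnF (w2 (j, true)) false X A Z n t (p, β) ω
                - EnLLNAux.gF P (w2 (j, true)) false X A Z t (p, β))
              - (EnLLNAux.GnF (w2 (j, false)) false X A Z n t (p, β) ω
                - EnLLNAux.gF P (w2 (j, false)) false X A Z t (p, β)) := by
          intro j
          have hEj : En1 X A Z n t p β ω j
              = EnLLNAux.GnF (w2 (j, true)) false X A Z n t (p, β) ω
                - EnLLNAux.GnF (w2 (j, false)) false X A Z n t (p, β) ω := by
            unfold En1 EnLLNAux.GnF
            rw [PiLp.smul_apply, EnLLNAux.sum_coord, smul_eq_mul, ← mul_sub,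
              ← Finset.sum_sub_distrib]
            congr 1
            refine Finset.sum_congr rfl fun i _ => ?_
            rw [PiLp.smul_apply, smul_eq_mul]
            exact EnLLNAux.mul_split _ _ _
          have hgj : e1pop P (X 0) (A 0) (Z 0) t p β j
              = EnLLNAux.gF P (w2 (j, true)) false X A Z t (p, β)
                - EnLLNAux.gF P (w2 (j, false)) false X A Z t (p, β) := by
            unfold e1pop
            rw [EnLLNAux.integral_coord P _ hintvec j]
            have heq : ∀ ω' : Ω, (scal ω' • Z 0 ω') j
                = EnLLNAux.fF (w2 (j, true)) false t (p, β) (X 0 ω', A 0 ω', Z 0 ω')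
                  - EnLLNAux.fF (w2 (j, false)) false t (p, β) (X 0 ω', A 0 ω', Z 0 ω') := by
              intro ω'
              rw [PiLp.smul_apply, smul_eq_mul]
              exact EnLLNAux.mul_split _ _ _
            rw [integral_congr_ae (ae_of_all _ heq), integral_sub
              (EnLLNAux.fF_int hmeas0 hZ0 (hw2meas (j, true)) (hw2b (j, true)) hKsub hκK false t)
              (EnLLNAux.fF_int hmeas0 hZ0 (hw2meas (j, false)) (hw2b (j, false)) hKsub hκK false t)]
            rfl
          rw [PiLp.sub_apply, hEj, hgj]
          ring
        -- pigeonhole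
        have hnorm := EnLLNAux.norm_le_sum_abs
          (En1 X A Z n t p β ω - e1pop P (X 0) (A 0) (Z 0) t p β)
        set D : Fin q × Bool → ℝ := fun js =>
          EnLLNAux.GnF (w2 js) false X A Z n t (p, β) ω
            - EnLLNAux.gF P (w2 js) false X A Z t (p, β) with hDdef
        have hsumineq : δ ≤ ∑ js : Fin q × Bool, |D js| := by
          have h1 : ∀ j : Fin q,
              |(En1 X A Z n t p β ω - e1pop P (X 0) (A 0) (Z 0) t p β) j|
              ≤ |D (j, true)| + |D (j, false)| := by
            intro j
            rw [hVj j]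
            exact abs_sub _ _
          have h2 : ∑ js : Fin q × Bool, |D js|
              = ∑ j : Fin q, (|D (j, true)| + |D (j, false)|) := by
            rw [Fintype.sum_prod_type]
            refine Finset.sum_congr rfl fun j _ => ?_
            rw [Fintype.sum_bool]
          calc δ ≤ ‖En1 X A Z n t p β ω - e1pop P (X 0) (A 0) (Z 0) t p β‖ := hdev
          _ ≤ ∑ j, |(En1 X A Z n t p β ω - e1pop P (X 0) (A 0) (Z 0) t p β) j| := hnorm
          _ ≤ ∑ j : Fin q, (|D (j, true)| + |D (j, false)|) := Finset.sum_le_sum fun j _ => h1 j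
          _ = ∑ js : Fin q × Bool, |D js| := h2.symm
        have hpig : ∃ js : Fin q × Bool, δ/(2*q) ≤ |D js| := by
          by_contra hno
          push_neg at hno
          have hlt : ∑ js : Fin q × Bool, |D js| < ∑ _js : Fin q × Bool, δ/(2*q) :=
            Finset.sum_lt_sum_of_nonempty Finset.univ_nonempty fun js _ => hno js
          have hcard : ∑ _js : Fin q × Bool, δ/(2*q) = δ := by
            rw [Finset.sum_const, Finset.card_univ, nsmul_eq_mul]
            have : (Fintype.card (Fin q × Bool) : ℝ) = 2*q := by
              rw [Fintype.card_prod, Fintype.card_fin, Fintype.card_bool]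
              push_cast
              ring
            rw [this]
            field_simp
          rw [hcard] at hlt
          linarith
        obtain ⟨js, hjs⟩ := hpig
        refine Set.mem_biUnion (Finset.mem_coe.2 (Finset.mem_univ js)) ?_
        exact ⟨p, hp, β, hβ, t, ht, hjs⟩
      -- squeeze
      have hupper : Tendsto (fun n => ∑ js ∈ (Finset.univ : Finset (Fin q × Bool)),
          P {ω | ∃ p ∈ Set.Icc ε (1-ε), ∃ β ∈ B, ∃ t ∈ Set.Icc 0 τ,
            δ/(2*q) ≤ |EnLLNAux.GnF (w2 js) false X A Z n t (p, β) ω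
              - EnLLNAux.gF P (w2 js) false X A Z t (p, β)|}) atTop (𝓝 0) := by
        have h := tendsto_finset_sum (Finset.univ : Finset (Fin q × Bool))
          (fun js _ => hmaster js)
        simpa using h
      refine tendsto_of_tendsto_of_tendsto_of_le_of_le tendsto_const_nhds hupper
        (fun n => zero_le) (fun n => ?_)
      calc P {ω | ∃ p ∈ Set.Icc ε (1 - ε), ∃ β ∈ B, ∃ t ∈ Set.Icc 0 τ,
          δ ≤ ‖En1 X A Z n t p β ω - e1pop P (X 0) (A 0) (Z 0) t p β‖}
          ≤ P (⋃ js ∈ (Finset.univ : Finset (Fin q × Bool)),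
            {ω | ∃ p ∈ Set.Icc ε (1-ε), ∃ β ∈ B, ∃ t ∈ Set.Icc 0 τ,
              δ/(2*q) ≤ |EnLLNAux.GnF (w2 js) false X A Z n t (p, β) ω
                - EnLLNAux.gF P (w2 js) false X A Z t (p, β)|}) := measure_mono (hsub n)
        _ ≤ ∑ js ∈ (Finset.univ : Finset (Fin q × Bool)),
            P {ω | ∃ p ∈ Set.Icc ε (1-ε), ∃ β ∈ B, ∃ t ∈ Set.Icc 0 τ,
              δ/(2*q) ≤ |EnLLNAux.GnF (w2 js) false X A Z n t (p, β) ω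
                - EnLLNAux.gF P (w2 js) false X A Z t (p, β)|} :=
            measure_biUnion_finset_le _ _
end
end
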